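/- arXiv:1703.06105 — 13 statements merged into one kernel-verified Lean document; each statement's English description precedes it below -/
import Mathlib

section
/- Let H be a Banach space and P, Q be bounded idempotent operators on H. If both (range P, range Q) and (ker P, ker Q) are complementary pairs of closed subspaces (i.e., intersect trivially and span H), then P - Q is invertible, and its inverse is S - T, where S is the projection onto range P along range Q and T is the projection onto ker P along ker Q. -/
private lemma aux_range {H : Type*} [NormedAddCommGroup H] [NormedSpace ℂ H]
    (A B : H →L[ℂ] H) (hA : A ∘L A = A)
    (h : LinearMap.range (B : H →ₗ[ℂ] H) ≤ LinearMap.range (A : H →ₗ[ℂ] H)) : A ∘L B = B := by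
  ext x
  obtain ⟨y, hy⟩ := h ⟨x, rfl⟩
  simp only [ContinuousLinearMap.coe_coe] at hy
  simp only [ContinuousLinearMap.comp_apply]
  rw [← hy]
  exact DFunLike.congr_fun hA y

private lemma aux_ker {H : Type*} [NormedAddCommGroup H] [NormedSpace ℂ H]
    (A B : H →L[ℂ] H)
    (h : LinearMap.range (B : H →ₗ[ℂ] H) ≤ LinearMap.ker (A : H →ₗ[ℂ] H)) : A ∘L B = 0 := by
  ext x
  exact h ⟨x, rfl⟩

/-- Let `H` be a Banach space and `P, Q` bounded idempotents on `H`.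
If both `(range P, range Q)` and `(ker P, ker Q)` are complementary pairs of closed
subspaces, then `P - Q` is invertible, and its inverse is `S - T`, where `S` is the
projection onto `range P` along `range Q` and `T` is the projection onto `ker P`
along `ker Q`. -/
theorem stmt0 {H : Type*} [NormedAddCommGroup H] [NormedSpace ℂ H] [CompleteSpace H]
    (P Q S T : H →L[ℂ] H)
    (hP : P ∘L P = P) (hQ : Q ∘L Q = Q)
    (hran : IsCompl (LinearMap.range (P : H →ₗ[ℂ] H)) (LinearMap.range (Q : H →ₗ[ℂ] H)))
    (hker : IsCompl (LinearMap.ker (P : H →ₗ[ℂ] H)) (LinearMap.ker (Q : H →ₗ[ℂ] H)))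
    (hS : S ∘L S = S) (hSran : LinearMap.range (S : H →ₗ[ℂ] H) = LinearMap.range (P : H →ₗ[ℂ] H))
    (hSker : LinearMap.ker (S : H →ₗ[ℂ] H) = LinearMap.range (Q : H →ₗ[ℂ] H))
    (hT : T ∘L T = T) (hTran : LinearMap.range (T : H →ₗ[ℂ] H) = LinearMap.ker (P : H →ₗ[ℂ] H))
    (hTker : LinearMap.ker (T : H →ₗ[ℂ] H) = LinearMap.ker (Q : H →ₗ[ℂ] H)) :
    IsUnit (P - Q) ∧ (P - Q) ∘L (S - T) = 1 ∧ (S - T) ∘L (P - Q) = 1 := by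
  have hrange1S : LinearMap.range ((1 - S : H →L[ℂ] H) : H →ₗ[ℂ] H) ≤ LinearMap.ker (S : H →ₗ[ℂ] H) := by
    rintro x ⟨y, rfl⟩
    have := DFunLike.congr_fun hS y
    simp only [ContinuousLinearMap.comp_apply] at this
    simp [LinearMap.mem_ker, this]
  have hrange1P : LinearMap.range ((1 - P : H →L[ℂ] H) : H →ₗ[ℂ] H) ≤ LinearMap.ker (P : H →ₗ[ℂ] H) := by
    rintro x ⟨y, rfl⟩
    have := DFunLike.congr_fun hP y
    simp only [ContinuousLinearMap.comp_apply] at this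
    simp [LinearMap.mem_ker, this]
  have hrange1T : LinearMap.range ((1 - T : H →L[ℂ] H) : H →ₗ[ℂ] H) ≤ LinearMap.ker (T : H →ₗ[ℂ] H) := by
    rintro x ⟨y, rfl⟩
    have := DFunLike.congr_fun hT y
    simp only [ContinuousLinearMap.comp_apply] at this
    simp [LinearMap.mem_ker, this]
  have hrange1Q : LinearMap.range ((1 - Q : H →L[ℂ] H) : H →ₗ[ℂ] H) ≤ LinearMap.ker (Q : H →ₗ[ℂ] H) := by
    rintro x ⟨y, rfl⟩
    have := DFunLike.congr_fun hQ y
    simp only [ContinuousLinearMap.comp_apply] at this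
    simp [LinearMap.mem_ker, this]
  -- basic identities
  have hPS : P * S = S := aux_range P S hP (le_of_eq hSran)
  have hSP : S * P = P := aux_range S P hS (le_of_eq hSran.symm)
  have hPT : P * T = 0 := aux_ker P T (le_of_eq hTran)
  have hSQ : S * Q = 0 := aux_ker S Q (le_of_eq hSker.symm)
  have hQ1S : Q * (1 - S) = 1 - S :=
    aux_range Q (1 - S) hQ (le_trans hrange1S (le_of_eq hSker))
  have hT1P : T * (1 - P) = 1 - P :=
    aux_range T (1 - P) hT (le_trans hrange1P (le_of_eq hTran.symm))
  have hQ1T : Q * (1 - T) = 0 :=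
    aux_ker Q (1 - T) (le_trans hrange1T (le_of_eq hTker))
  have hT1Q : T * (1 - Q) = 0 :=
    aux_ker T (1 - Q) (le_trans hrange1Q (le_of_eq hTker.symm))
  have hQS : Q * S = Q - 1 + S := by
    have : Q - Q * S = 1 - S := by rw [← hQ1S]; noncomm_ring
    linear_combination (norm := noncomm_ring) -this
  have hQT : Q * T = Q := by
    have : Q - Q * T = 0 := by rw [← hQ1T]; noncomm_ring
    linear_combination (norm := noncomm_ring) -this
  have hTP : T * P = T - 1 + P := by
    have : T - T * P = 1 - P := by rw [← hT1P]; noncomm_ring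
    linear_combination (norm := noncomm_ring) -this
  have hTQ : T * Q = T := by
    have : T - T * Q = 0 := by rw [← hT1Q]; noncomm_ring
    linear_combination (norm := noncomm_ring) -this
  have key1 : (P - Q) * (S - T) = 1 := by
    have : (P - Q) * (S - T) = P * S - P * T - Q * S + Q * T := by noncomm_ring
    rw [this, hPS, hPT, hQS, hQT]; abel
  have key2 : (S - T) * (P - Q) = 1 := by
    have : (S - T) * (P - Q) = S * P - S * Q - T * P + T * Q := by noncomm_ring
    rw [this, hSP, hSQ, hTP, hTQ]; abel
  exact ⟨⟨⟨P - Q, S - T, key1, key2⟩, rfl⟩, key1, key2⟩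
end

section
/- Let H be a Banach space and P, Q be bounded idempotent operators on H. If P - Q is invertible, then (range P, range Q) and (ker P, ker Q) are both complementary pairs of closed subspaces, the projection onto range P along range Q equals P(P-Q)⁻¹, and the projection onto ker P along ker Q equals (P-1)(P-Q)⁻¹. -/
section Aux

variable {H : Type*} [NormedAddCommGroup H] [NormedSpace ℂ H]

private lemma idem_range_eq_ker (E : H →L[ℂ] H) (hE : E * E = E) :
    LinearMap.range (E : H →ₗ[ℂ] H) = LinearMap.ker ((1 - E : H →L[ℂ] H) : H →ₗ[ℂ] H) := by
  apply le_antisymm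
  · rintro x ⟨y, rfl⟩
    have h := DFunLike.congr_fun hE y
    simp only [ContinuousLinearMap.mul_apply] at h
    simp [LinearMap.mem_ker, ContinuousLinearMap.sub_apply, h]
  · intro x hx
    have h : x - E x = 0 := by
      simpa [ContinuousLinearMap.sub_apply] using hx
    exact ⟨x, (sub_eq_zero.mp h).symm⟩

private lemma idem_range_one_sub (E : H →L[ℂ] H) (hE : E * E = E) :
    LinearMap.range ((1 - E : H →L[ℂ] H) : H →ₗ[ℂ] H) = LinearMap.ker (E : H →ₗ[ℂ] H) := by
  apply le_antisymm
  · rintro x ⟨y, rfl⟩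
    have h := DFunLike.congr_fun hE y
    simp only [ContinuousLinearMap.mul_apply] at h
    simp [LinearMap.mem_ker, ContinuousLinearMap.sub_apply, h]
  · intro x hx
    have hx' : E x = 0 := hx
    exact ⟨x, by simp [ContinuousLinearMap.sub_apply, hx']⟩

private lemma idem_isClosed_range (E : H →L[ℂ] H) (hE : E * E = E) :
    IsClosed ((LinearMap.range (E : H →ₗ[ℂ] H) : Submodule ℂ H) : Set H) := by
  rw [idem_range_eq_ker E hE]
  exact ContinuousLinearMap.isClosed_ker (1 - E)

private lemma idem_isCompl (E : H →L[ℂ] H) (hE : E * E = E) :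
    IsCompl (LinearMap.range (E : H →ₗ[ℂ] H)) (LinearMap.ker (E : H →ₗ[ℂ] H)) := by
  constructor
  · rw [Submodule.disjoint_def]
    rintro x ⟨y, rfl⟩ hx
    have h := DFunLike.congr_fun hE y
    simp only [ContinuousLinearMap.mul_apply] at h
    have hx' : E (E y) = 0 := hx
    rw [h] at hx'
    exact hx'
  · rw [codisjoint_iff, eq_top_iff]
    intro x _
    have h1 : E x ∈ LinearMap.range (E : H →ₗ[ℂ] H) := ⟨x, rfl⟩
    have h2 : x - E x ∈ LinearMap.ker (E : H →ₗ[ℂ] H) := by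
      have h := DFunLike.congr_fun hE x
      simp only [ContinuousLinearMap.mul_apply] at h
      simp [LinearMap.mem_ker, h]
    simpa using Submodule.add_mem_sup h1 h2

/-- The core algebraic lemma: if `P, Q` are idempotent and `R` is a two-sided
inverse of `P - Q`, then `P * R` is an idempotent with range `range P` and
kernel `range Q`. -/
private lemma key (P Q R : H →L[ℂ] H) (hP : P * P = P) (hQ : Q * Q = Q)
    (hR1 : (P - Q) * R = 1) (hR2 : R * (P - Q) = 1) :
    (P * R) * (P * R) = P * R ∧
    LinearMap.range ((P * R : H →L[ℂ] H) : H →ₗ[ℂ] H) = LinearMap.range (P : H →ₗ[ℂ] H) ∧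
    LinearMap.ker ((P * R : H →L[ℂ] H) : H →ₗ[ℂ] H) = LinearMap.range (Q : H →ₗ[ℂ] H) := by
  -- `P` commutes with `D = (P-Q)^2`
  have hD : P * ((P - Q) * (P - Q)) = ((P - Q) * (P - Q)) * P := by
    have hP' : ∀ x : H →L[ℂ] H, P * (P * x) = P * x := fun x => by rw [← mul_assoc, hP]
    have hQ' : ∀ x : H →L[ℂ] H, Q * (Q * x) = Q * x := fun x => by rw [← mul_assoc, hQ]
    simp only [mul_sub, sub_mul, mul_assoc, hP, hQ, hP', hQ']
    abel
  -- `R*R` is a two-sided inverse of `D`, hence commutes with `P`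
  have hu : ((P - Q) * (P - Q)) * (R * R) = 1 := by
    rw [mul_assoc, ← mul_assoc (P - Q) R R, hR1, one_mul, hR1]
  have hu' : (R * R) * ((P - Q) * (P - Q)) = 1 := by
    rw [mul_assoc, ← mul_assoc R (P - Q) (P - Q), hR2, one_mul, hR2]
  have hPRR : P * (R * R) = (R * R) * P := by
    calc P * (R * R) = ((R * R) * ((P - Q) * (P - Q))) * (P * (R * R)) := by
          rw [hu', one_mul]
      _ = (R * R) * ((P * ((P - Q) * (P - Q))) * (R * R)) := by
          rw [hD]; noncomm_ring
      _ = (R * R) * (P * (((P - Q) * (P - Q)) * (R * R))) := by noncomm_ring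
      _ = (R * R) * P := by rw [hu, mul_one]
  have hRRPQ : (R * R) * (P - Q) = R := by rw [mul_assoc, hR2, mul_one]
  have hPPQQ : P * ((P - Q) * Q) = 0 := by
    rw [sub_mul, hQ, mul_sub, ← mul_assoc, hP, sub_self]
  have step : P * R = (R * R) * (P * (P - Q)) := by
    conv_lhs => rw [← hRRPQ]
    rw [← mul_assoc, hPRR, mul_assoc]
  have hPRQ : (P * R) * Q = 0 := by
    rw [step, mul_assoc, mul_assoc, mul_assoc P (P - Q) Q, hPPQQ, mul_zero, mul_zero]
  have hRP : R * P = 1 + R * Q := by rw [← hR2, mul_sub]; abel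
  have hE2 : (P * R) * (P * R) = P * R := by
    calc (P * R) * (P * R) = P * ((R * P) * R) := by noncomm_ring
      _ = P * ((1 + R * Q) * R) := by rw [hRP]
      _ = P * R + ((P * R) * Q) * R := by noncomm_ring
      _ = P * R := by rw [hPRQ, zero_mul, add_zero]
  have hEP : (P * R) * P = P := by
    calc (P * R) * P = P * (R * P) := by noncomm_ring
      _ = P * (1 + R * Q) := by rw [hRP]
      _ = P + (P * R) * Q := by noncomm_ring
      _ = P := by rw [hPRQ, add_zero]
  refine ⟨hE2, ?_, ?_⟩
  · apply le_antisymm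
    · rintro x ⟨y, rfl⟩
      exact ⟨R y, rfl⟩
    · rintro x ⟨y, rfl⟩
      refine ⟨P y, ?_⟩
      have := DFunLike.congr_fun hEP y
      simpa [ContinuousLinearMap.mul_apply] using this
  · apply le_antisymm
    · intro x hx
      have h2 : P (R x) = 0 := by
        simpa [ContinuousLinearMap.mul_apply] using hx
      have h1 : P (R x) - Q (R x) = x := by
        have := DFunLike.congr_fun hR1 x
        simpa [ContinuousLinearMap.mul_apply, ContinuousLinearMap.sub_apply] using this
      rw [h2, zero_sub] at h1
      refine ⟨-(R x), ?_⟩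
      rw [map_neg]
      exact h1
    · rintro x ⟨y, rfl⟩
      have := DFunLike.congr_fun hPRQ y
      simpa [ContinuousLinearMap.mul_apply] using this

end Aux

/-- Let `H` be a Banach space and `P, Q` bounded idempotents on `H`.
If `P - Q` is invertible, then `(range P, range Q)` and `(ker P, ker Q)` are both
complementary pairs of closed subspaces, the projection onto `range P` along `range Q`
equals `P (P - Q)⁻¹`, and the projection onto `ker P` along `ker Q` equals
`(P - 1) (P - Q)⁻¹`. -/
theorem stmt1 {H : Type*} [NormedAddCommGroup H] [NormedSpace ℂ H] [CompleteSpace H]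
    (P Q : H →L[ℂ] H) (hP : P ∘L P = P) (hQ : Q ∘L Q = Q)
    (R : H →L[ℂ] H) (hR1 : (P - Q) ∘L R = 1) (hR2 : R ∘L (P - Q) = 1) :
    (IsClosed ((LinearMap.range (P : H →ₗ[ℂ] H) : Submodule ℂ H) : Set H) ∧
      IsClosed ((LinearMap.range (Q : H →ₗ[ℂ] H) : Submodule ℂ H) : Set H) ∧
      IsClosed ((LinearMap.ker (P : H →ₗ[ℂ] H) : Submodule ℂ H) : Set H) ∧
      IsClosed ((LinearMap.ker (Q : H →ₗ[ℂ] H) : Submodule ℂ H) : Set H)) ∧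
    IsCompl (LinearMap.range (P : H →ₗ[ℂ] H)) (LinearMap.range (Q : H →ₗ[ℂ] H)) ∧
    IsCompl (LinearMap.ker (P : H →ₗ[ℂ] H)) (LinearMap.ker (Q : H →ₗ[ℂ] H)) ∧
    ((P ∘L R) ∘L (P ∘L R) = P ∘L R ∧
      LinearMap.range ((P ∘L R : H →L[ℂ] H) : H →ₗ[ℂ] H) = LinearMap.range (P : H →ₗ[ℂ] H) ∧
      LinearMap.ker ((P ∘L R : H →L[ℂ] H) : H →ₗ[ℂ] H) = LinearMap.range (Q : H →ₗ[ℂ] H)) ∧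
    (((P - 1) ∘L R) ∘L ((P - 1) ∘L R) = (P - 1) ∘L R ∧
      LinearMap.range (((P - 1) ∘L R : H →L[ℂ] H) : H →ₗ[ℂ] H) = LinearMap.ker (P : H →ₗ[ℂ] H) ∧
      LinearMap.ker (((P - 1) ∘L R : H →L[ℂ] H) : H →ₗ[ℂ] H) = LinearMap.ker (Q : H →ₗ[ℂ] H)) := by
  -- translate composition to multiplication
  have hP' : P * P = P := hP
  have hQ' : Q * Q = Q := hQ
  have hR1' : (P - Q) * R = 1 := hR1
  have hR2' : R * (P - Q) = 1 := hR2
  obtain ⟨hE2, hErange, hEker⟩ := key P Q R hP' hQ' hR1' hR2'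
  -- the complementary idempotent data
  have hP1 : (1 - P) * (1 - P) = 1 - P := by
    have : (1 - P) * (1 - P) = 1 - P - P + P * P := by noncomm_ring
    rw [this, hP']; abel
  have hQ1 : (1 - Q) * (1 - Q) = 1 - Q := by
    have : (1 - Q) * (1 - Q) = 1 - Q - Q + Q * Q := by noncomm_ring
    rw [this, hQ']; abel
  have hsub : (1 - P) - (1 - Q) = -(P - Q) := by abel
  have hR1'' : ((1 - P) - (1 - Q)) * (-R) = 1 := by
    rw [hsub, neg_mul_neg, hR1']
  have hR2'' : (-R) * ((1 - P) - (1 - Q)) = 1 := by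
    rw [hsub, neg_mul_neg, hR2']
  obtain ⟨hF2, hFrange, hFker⟩ := key (1 - P) (1 - Q) (-R) hP1 hQ1 hR1'' hR2''
  have hFeq : (1 - P) * (-R) = (P - 1) * R := by noncomm_ring
  rw [hFeq] at hF2 hFrange hFker
  rw [idem_range_one_sub P hP'] at hFrange
  rw [idem_range_one_sub Q hQ'] at hFker
  refine ⟨⟨idem_isClosed_range P hP', idem_isClosed_range Q hQ',
      ContinuousLinearMap.isClosed_ker P, ContinuousLinearMap.isClosed_ker Q⟩, ?_, ?_, ⟨hE2, hErange, hEker⟩,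
      ⟨hF2, hFrange, hFker⟩⟩
  · have := idem_isCompl (P * R) hE2
    rwa [hErange, hEker] at this
  · have := idem_isCompl ((P - 1) * R) hF2
    rwa [hFrange, hFker] at this
end

section
/- Let H be a Banach space and P, Q bounded idempotents on H such that (range P, range Q) and (ker P, ker Q) are complementary pairs. Then P + Q is invertible, with P + Q = (2S - 1)(P - Q), where S is the projection onto range P along range Q. -/
/-- Let `H` be a Banach space and `P, Q` bounded idempotents on `H`
such that `(range P, range Q)` and `(ker P, ker Q)` are complementary pairs.
Then `P + Q` is invertible, with `P + Q = (2S - 1)(P - Q)`, where `S` is the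
projection onto `range P` along `range Q`. -/
theorem stmt2 {H : Type*} [NormedAddCommGroup H] [NormedSpace ℂ H] [CompleteSpace H]
    (P Q S : H →L[ℂ] H)
    (hP : P ∘L P = P) (hQ : Q ∘L Q = Q)
    (hran : IsCompl (LinearMap.range (P : H →ₗ[ℂ] H)) (LinearMap.range (Q : H →ₗ[ℂ] H)))
    (hker : IsCompl (LinearMap.ker (P : H →ₗ[ℂ] H)) (LinearMap.ker (Q : H →ₗ[ℂ] H)))
    (hS : S ∘L S = S) (hSran : LinearMap.range (S : H →ₗ[ℂ] H) = LinearMap.range (P : H →ₗ[ℂ] H))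
    (hSker : LinearMap.ker (S : H →ₗ[ℂ] H) = LinearMap.range (Q : H →ₗ[ℂ] H)) :
    IsUnit (P + Q) ∧ P + Q = ((2 : ℂ) • S - 1) ∘L (P - Q) := by
  -- S fixes range P
  have hSP : S ∘L P = P := by
    ext x
    obtain ⟨z, hz⟩ : P x ∈ LinearMap.range (S : H →ₗ[ℂ] H) := by
      rw [hSran]; exact LinearMap.mem_range_self (P : H →ₗ[ℂ] H) x
    simp only [ContinuousLinearMap.comp_apply]
    replace hz : S z = P x := hz
    rw [← hz, ← ContinuousLinearMap.comp_apply, hS]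
  -- S kills range Q
  have hSQ : S ∘L Q = 0 := by
    ext x
    have : Q x ∈ LinearMap.ker (S : H →ₗ[ℂ] H) := by
      rw [hSker]; exact LinearMap.mem_range_self (Q : H →ₗ[ℂ] H) x
    simpa using this
  -- the factorization
  have heq : P + Q = ((2 : ℂ) • S - 1) ∘L (P - Q) := by
    have : ((2 : ℂ) • S - 1) * (P - Q) = P + Q := by
      have h1 : S * P = P := hSP
      have h2 : S * Q = 0 := hSQ
      calc ((2 : ℂ) • S - 1) * (P - Q)
          = (2 : ℂ) • (S * P) - (2 : ℂ) • (S * Q) - (P - Q) := by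
            simp only [sub_mul, mul_sub, smul_mul_assoc, smul_sub, one_mul]
            module
        _ = P + Q := by
            rw [h1, h2, smul_zero, sub_zero, two_smul]; abel
    rw [← this]; rfl
  -- 2S - 1 is a unit (self-inverse)
  have hunit1 : IsUnit ((2 : ℂ) • S - 1) := by
    have hsq : ((2 : ℂ) • S - 1) * ((2 : ℂ) • S - 1) = 1 := by
      have h1 : S * S = S := hS
      calc ((2 : ℂ) • S - 1) * ((2 : ℂ) • S - 1)
          = (4 : ℂ) • (S * S) - (4 : ℂ) • S + 1 := by
            simp only [sub_mul, mul_sub, smul_mul_assoc, mul_smul_comm, one_mul, mul_one,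
              smul_smul]
            module
        _ = 1 := by rw [h1]; module
    exact ⟨⟨(2 : ℂ) • S - 1, (2 : ℂ) • S - 1, hsq, hsq⟩, rfl⟩
  -- P - Q is injective
  have hinjker : LinearMap.ker ((P - Q : H →L[ℂ] H) : H →ₗ[ℂ] H) = ⊥ := by
    rw [Submodule.eq_bot_iff]
    intro x hx
    have hx' : P x = Q x := by
      have h0 : P x - Q x = 0 := hx
      exact sub_eq_zero.mp h0
    have h1 : P x ∈ LinearMap.range (P : H →ₗ[ℂ] H) ⊓ LinearMap.range (Q : H →ₗ[ℂ] H) :=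
      ⟨LinearMap.mem_range_self (P : H →ₗ[ℂ] H) x, hx' ▸ LinearMap.mem_range_self (Q : H →ₗ[ℂ] H) x⟩
    rw [hran.inf_eq_bot] at h1
    have hPx : P x = 0 := h1
    have hQx : Q x = 0 := hx' ▸ hPx
    have h2 : x ∈ LinearMap.ker (P : H →ₗ[ℂ] H) ⊓ LinearMap.ker (Q : H →ₗ[ℂ] H) := ⟨hPx, hQx⟩
    rw [hker.inf_eq_bot] at h2
    exact h2
  -- P - Q is surjective
  have hsurjran : LinearMap.range ((P - Q : H →L[ℂ] H) : H →ₗ[ℂ] H) = ⊤ := by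
    rw [LinearMap.range_eq_top]
    intro y
    obtain ⟨u, hu⟩ : S y ∈ LinearMap.range (P : H →ₗ[ℂ] H) := by
      rw [← hSran]; exact LinearMap.mem_range_self (S : H →ₗ[ℂ] H) y
    obtain ⟨v, hv⟩ : S y - y ∈ LinearMap.range (Q : H →ₗ[ℂ] H) := by
      rw [← hSker]
      show S (S y - y) = 0
      rw [map_sub, ← ContinuousLinearMap.comp_apply, hS, sub_self]
    have hmem : v - u ∈ LinearMap.ker (P : H →ₗ[ℂ] H) ⊔ LinearMap.ker (Q : H →ₗ[ℂ] H) := by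
      rw [hker.sup_eq_top]; trivial
    obtain ⟨k₁, hk₁, k₂, hk₂, hsum⟩ := Submodule.mem_sup.mp hmem
    refine ⟨u + k₁, ?_⟩
    have huv : u + k₁ = v - k₂ := by
      rw [eq_sub_iff_add_eq, add_assoc, hsum]; abel
    have hP1 : P (u + k₁) = S y := by
      rw [map_add, show P k₁ = 0 from LinearMap.mem_ker.mp hk₁, add_zero, show P u = S y from hu]
    have hQ1 : Q (u + k₁) = S y - y := by
      rw [huv, map_sub, show Q k₂ = 0 from LinearMap.mem_ker.mp hk₂, sub_zero, show Q v = S y - y from hv]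
    show P (u + k₁) - Q (u + k₁) = y
    rw [hP1, hQ1]; abel
  let e : H ≃L[ℂ] H := ContinuousLinearEquiv.ofBijective (P - Q) hinjker hsurjran
  have hcoe : (e : H →L[ℂ] H) = P - Q := rfl
  have hunit2 : IsUnit (P - Q) := by
    refine ⟨⟨P - Q, (e.symm : H →L[ℂ] H), ?_, ?_⟩, rfl⟩
    · ext x
      simp only [ContinuousLinearMap.mul_apply, ContinuousLinearMap.one_apply, ← hcoe]
      exact e.apply_symm_apply x
    · ext x
      simp only [ContinuousLinearMap.mul_apply, ContinuousLinearMap.one_apply, ← hcoe]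
      exact e.symm_apply_apply x
  refine ⟨?_, heq⟩
  rw [heq]
  exact hunit1.mul hunit2
end

section
/- Let H be a Hilbert space and L, M closed subspaces of H. The pair (L, M) is complementary (L ∩ M = 0 and L + M = H) if and only if P_L - P_M is invertible, where P_L and P_M are the orthogonal projections onto L and M. In this case, the projection onto L along M equals P_L(P_L - P_M)⁻¹. -/
open ContinuousLinearMap

/-- Let `H` be a Hilbert space and `L, M` closed subspaces of `H`.
The pair `(L, M)` is complementary iff `P_L - P_M` is invertible, where `P_L, P_M` are
the orthogonal projections onto `L` and `M`. In this case, the projection onto `L`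
along `M` equals `P_L (P_L - P_M)⁻¹`. -/
theorem stmt3 {H : Type*} [NormedAddCommGroup H] [InnerProductSpace ℂ H] [CompleteSpace H]
    (L M : Submodule ℂ H) [CompleteSpace L] [CompleteSpace M] :
    (IsCompl L M ↔
      IsUnit (L.subtypeL ∘L Submodule.orthogonalProjectionOnto L - M.subtypeL ∘L Submodule.orthogonalProjectionOnto M)) ∧
    (∀ R : H →L[ℂ] H,
      (L.subtypeL ∘L Submodule.orthogonalProjectionOnto L - M.subtypeL ∘L Submodule.orthogonalProjectionOnto M) ∘L R = 1 →
      R ∘L (L.subtypeL ∘L Submodule.orthogonalProjectionOnto L - M.subtypeL ∘L Submodule.orthogonalProjectionOnto M) = 1 →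
      (((L.subtypeL ∘L Submodule.orthogonalProjectionOnto L) ∘L R) ∘L
          ((L.subtypeL ∘L Submodule.orthogonalProjectionOnto L) ∘L R) =
        (L.subtypeL ∘L Submodule.orthogonalProjectionOnto L) ∘L R ∧
      LinearMap.range (((L.subtypeL ∘L Submodule.orthogonalProjectionOnto L) ∘L R : H →L[ℂ] H) : H →ₗ[ℂ] H) = L ∧
      LinearMap.ker (((L.subtypeL ∘L Submodule.orthogonalProjectionOnto L) ∘L R : H →L[ℂ] H) : H →ₗ[ℂ] H) = M)) := by
  classical
  set P : H →L[ℂ] H := L.subtypeL ∘L Submodule.orthogonalProjectionOnto L with hPdef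
  set Q : H →L[ℂ] H := M.subtypeL ∘L Submodule.orthogonalProjectionOnto M with hQdef
  have hPmem : ∀ x : H, P x ∈ L := fun x => (Submodule.orthogonalProjectionOnto L x).2
  have hQmem : ∀ x : H, Q x ∈ M := fun x => (Submodule.orthogonalProjectionOnto M x).2
  have hPid : ∀ x ∈ L, P x = x := fun x hx => Submodule.starProjection_eq_self_iff.mpr hx
  have hQid : ∀ x ∈ M, Q x = x := fun x hx => Submodule.starProjection_eq_self_iff.mpr hx
  have hPsa : IsSelfAdjoint P := isSelfAdjoint_starProjection L
  have hQsa : IsSelfAdjoint Q := isSelfAdjoint_starProjection M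
  have hLc : IsClosed (L : Set H) :=
    (completeSpace_coe_iff_isComplete.mp ‹CompleteSpace L›).isClosed
  have hMc : IsClosed (M : Set H) :=
    (completeSpace_coe_iff_isComplete.mp ‹CompleteSpace M›).isClosed
  -- main construction: given complementarity, build the projection π onto L along M
  have hmain : ∀ _hc : IsCompl L M, ∃ π : H →L[ℂ] H,
      (∀ x ∈ L, π x = x) ∧ (∀ x ∈ M, π x = 0) ∧ (∀ x, π x ∈ L) ∧ (∀ x, x - π x ∈ M) ∧
        π * (P - Q) = P ∧ IsUnit (P - Q) := by
    intro hc
    set π0 : H →L[ℂ] L := L.linearProjOfClosedCompl M hc hLc hMc with hπ0def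
    set π : H →L[ℂ] H := L.subtypeL ∘L π0 with hπdef
    have e : ∀ y : H, π0 y = L.linearProjOfIsCompl M hc y := fun y => by
      rw [hπ0def, Submodule.coe_continuous_linearProjOfClosedCompl']; rfl
    have hπ_memL : ∀ x, π x ∈ L := fun x => (π0 x).2
    have hπ_id : ∀ x ∈ L, π x = x := by
      intro x hx
      have h1 : L.linearProjOfIsCompl M hc x = ⟨x, hx⟩ :=
        Submodule.linearProjOfIsCompl_apply_left hc ⟨x, hx⟩
      show (π0 x : H) = x
      rw [e x, h1]
    have hπ_zero : ∀ x ∈ M, π x = 0 := by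
      intro x hx
      have h1 : L.linearProjOfIsCompl M hc x = 0 :=
        Submodule.linearProjOfIsCompl_apply_right' hc hx
      show (π0 x : H) = 0
      rw [e x, h1]; rfl
    have hπ_sub : ∀ x, x - π x ∈ M := by
      intro x
      obtain ⟨a, haL, b, hbM, hab⟩ :=
        Submodule.mem_sup.mp (by rw [codisjoint_iff.mp hc.codisjoint]; exact Submodule.mem_top : x ∈ L ⊔ M)
      have : π x = a := by
        rw [← hab, map_add, hπ_id a haL, hπ_zero b hbM, add_zero]
      rw [this, ← hab]
      simpa using hbM
    have hπD : π * (P - Q) = P := by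
      ext x
      simp only [mul_apply_eq_comp, sub_apply, map_sub]
      rw [hπ_id _ (hPmem x), hπ_zero _ (hQmem x), sub_zero]
    have hPπ : P * π = π := by
      ext x
      simp only [mul_apply_eq_comp]
      exact hPid _ (hπ_memL x)
    have hQπ : Q * π = π + Q - 1 := by
      ext x
      simp only [mul_apply_eq_comp, add_apply, sub_apply, one_apply_eq_self]
      have h2 : Q x - Q (π x) = x - π x := by
        rw [← map_sub]; exact hQid _ (hπ_sub x)
      have : Q (π x) = Q x - (x - π x) := by rw [← h2]; abel
      rw [this]; abel
    have hDπstar : (P - Q) * star π = P := by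
      have h1 := congrArg star hπD
      rwa [star_mul, star_sub, hPsa.star_eq, hQsa.star_eq] at h1
    set S : H →L[ℂ] H := π + star π - 1 with hSdef
    have hDS : (P - Q) * S = 1 := by
      have hDπ2 : (P - Q) * π = π - (π + Q - 1) := by rw [sub_mul, hPπ, hQπ]
      calc (P - Q) * S = (P - Q) * π + (P - Q) * star π - (P - Q) * 1 := by
            rw [hSdef, mul_sub, mul_add]
        _ = (π - (π + Q - 1)) + P - (P - Q) := by rw [hDπ2, hDπstar, mul_one]
        _ = 1 := by abel
    have hSstar : star S = S := by
      rw [hSdef]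
      simp only [star_sub, star_add, star_star, star_one]
      abel
    have hSD : S * (P - Q) = 1 := by
      have h1 := congrArg star hDS
      rwa [star_mul, hSstar, star_sub, hPsa.star_eq, hQsa.star_eq, star_one] at h1
    exact ⟨π, hπ_id, hπ_zero, hπ_memL, hπ_sub, hπD, ⟨⟨P - Q, S, hDS, hSD⟩, rfl⟩⟩
  have isCompl_of_inv : ∀ R : H →L[ℂ] H,
      (P - Q) * R = 1 → R * (P - Q) = 1 → IsCompl L M := by
    intro R hDR hRD
    constructor
    · rw [Submodule.disjoint_def]
      intro x hxL hxM
      have hx0 : (P - Q) x = 0 := by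
        rw [sub_apply, hPid x hxL, hQid x hxM, sub_self]
      calc x = (R * (P - Q)) x := by rw [hRD]; rfl
        _ = R ((P - Q) x) := rfl
        _ = 0 := by rw [hx0, map_zero]
    · rw [codisjoint_iff, eq_top_iff]
      intro x _
      have hx : (P - Q) (R x) = x := by
        have h1 := congrArg (fun f : H →L[ℂ] H => f x) hDR
        simpa using h1
      rw [Submodule.mem_sup]
      refine ⟨P (R x), hPmem _, -(Q (R x)), neg_mem (hQmem _), ?_⟩
      rw [← sub_eq_add_neg, ← sub_apply, hx]
  constructor
  · constructor
    · intro hc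
      exact (hmain hc).choose_spec.2.2.2.2.2
    · intro h
      obtain ⟨u, hu⟩ := h
      refine isCompl_of_inv ↑u⁻¹ ?_ ?_
      · rw [← hu]; exact u.mul_inv
      · rw [← hu]; exact u.inv_mul
  · intro R hDR hRD
    have hDR' : (P - Q) * R = 1 := hDR
    have hRD' : R * (P - Q) = 1 := hRD
    have hc := isCompl_of_inv R hDR' hRD'
    obtain ⟨π, hπ_id, hπ_zero, hπ_memL, hπ_sub, hπD, -⟩ := hmain hc
    have hE : P ∘L R = π := by
      have h1 : P * R = π := by rw [← hπD, mul_assoc, hDR', mul_one]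
      exact h1
    rw [hE]
    refine ⟨?_, ?_, ?_⟩
    · ext x
      simp only [comp_apply]
      exact hπ_id _ (hπ_memL x)
    · apply le_antisymm
      · rintro y ⟨x, rfl⟩
        exact hπ_memL x
      · intro x hx
        exact ⟨x, hπ_id x hx⟩
    · ext x
      simp only [LinearMap.mem_ker]
      constructor
      · intro h0
        have h1 := hπ_sub x
        rwa [show π x = 0 from h0, sub_zero] at h1
      · intro hx
        exact hπ_zero x hx
end

section
/- Let H be a Hilbert space and P a bounded idempotent operator on H. Then P + P* - 1 is invertible, and the orthogonal projection onto the range of P is given by P(P + P* - 1)⁻¹. -/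
/-- Let `H` be a Hilbert space and `P` a bounded idempotent on `H`.
Then `P + P* - 1` is invertible, and the orthogonal projection onto the range of `P`
(characterized as the self-adjoint idempotent with range `range P`) is given by
`P (P + P* - 1)⁻¹`. -/
theorem stmt4 {H : Type*} [NormedAddCommGroup H] [InnerProductSpace ℂ H] [CompleteSpace H]
    (P : H →L[ℂ] H) (hP : P ∘L P = P) :
    IsUnit (P + ContinuousLinearMap.adjoint P - 1) ∧
    ∀ R : H →L[ℂ] H,
      (P + ContinuousLinearMap.adjoint P - 1) ∘L R = 1 →
      R ∘L (P + ContinuousLinearMap.adjoint P - 1) = 1 →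
      (IsSelfAdjoint (P ∘L R) ∧ (P ∘L R) ∘L (P ∘L R) = P ∘L R ∧
        LinearMap.range ((P ∘L R : H →L[ℂ] H) : H →ₗ[ℂ] H) = LinearMap.range (P : H →ₗ[ℂ] H)) := by
  set Q := ContinuousLinearMap.adjoint P with hQ
  have hP' : P * P = P := hP
  have hQ' : Q * Q = Q := by
    show Q ∘L Q = Q
    rw [hQ, ← ContinuousLinearMap.adjoint_comp, hP]
  set A := P + Q - 1 with hA
  have hstarP : star P = Q := rfl
  have hstarQ : star Q = P := by
    rw [hQ, ContinuousLinearMap.star_eq_adjoint, ContinuousLinearMap.adjoint_adjoint]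
  have hAsa : star A = A := by
    rw [hA, star_sub, star_add, star_one, hstarP, hstarQ]
    abel
  -- A * A = 1 + star (P - Q) * (P - Q)
  have hA2 : A * A = 1 + star (P - Q) * (P - Q) := by
    have : star (P - Q) = Q - P := by rw [star_sub, hstarP, hstarQ]
    rw [this]
    have e : A * A - (1 + (Q - P) * (P - Q)) = 2 • (P * P - P) + 2 • (Q * Q - Q) := by
      rw [hA]; noncomm_ring
    have e2 : A * A - (1 + (Q - P) * (P - Q)) = 0 := by
      rw [e, hP', hQ']; simp
    rw [sub_eq_zero] at e2
    exact e2
  -- 1 + star B * B is a unit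
  have hunit2 : IsUnit (A * A) := by
    rw [hA2]
    set B := P - Q
    have hspec := spectrum_star_mul_self_nonneg (b := B)
    have hmem : (-1 : ℝ) ∉ spectrum ℝ (star B * B) := fun h => by
      linarith [hspec _ h]
    rw [spectrum.notMem_iff] at hmem
    have : IsUnit (-(1 + star B * B)) := by
      convert hmem using 1
      rw [map_neg, map_one]
      abel
    simpa using this.neg
  -- A is a unit
  obtain ⟨u, hu⟩ := hunit2
  have hcomm : Commute A ((u⁻¹ : (H →L[ℂ] H)ˣ) : H →L[ℂ] H) := by
    refine Commute.units_inv_right ?_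
    rw [hu]
    exact (Commute.refl A).mul_right (Commute.refl A)
  have hAunit : IsUnit A := by
    refine ⟨⟨A, A * ↑u⁻¹, ?_, ?_⟩, rfl⟩
    · rw [← mul_assoc, ← hu, Units.mul_inv]
    · rw [mul_assoc, ← hcomm.eq, ← mul_assoc, ← hu, Units.mul_inv]
  refine ⟨hAunit, fun R hAR hRA => ?_⟩
  have hAR' : A * R = 1 := hAR
  have hRA' : R * A = 1 := hRA
  -- key identities
  have hPA : P * A = P * Q := by
    rw [hA, mul_sub, mul_add, hP', mul_one]; abel
  have hAQ : A * Q = P * Q := by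
    rw [hA, sub_mul, add_mul, hQ', one_mul]; abel
  have hAP : A * P = Q * P := by
    rw [hA, sub_mul, add_mul, hP', one_mul]; abel
  have hQA : Q * A = Q * P := by
    rw [hA, mul_sub, mul_add, hQ', mul_one]; abel
  have hPR : P * R = R * Q := by
    calc P * R = (R * A) * (P * R) := by rw [hRA', one_mul]
    _ = R * (A * P) * R := by noncomm_ring
    _ = R * (Q * A) * R := by rw [hAP, hQA]
    _ = (R * Q) * (A * R) := by noncomm_ring
    _ = R * Q := by rw [hAR', mul_one]
  have hRP : R * P = Q * R := by
    calc R * P = (R * P) * (A * R) := by rw [hAR', mul_one]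
    _ = R * (P * A) * R := by noncomm_ring
    _ = R * (A * Q) * R := by rw [hPA, hAQ]
    _ = (R * A) * (Q * R) := by noncomm_ring
    _ = Q * R := by rw [hRA', one_mul]
  have hRstar : star R = R := by
    have h1 : star R * A = 1 := by
      have := congrArg star hAR'
      rwa [star_mul, hAsa, star_one] at this
    calc star R = star R * (A * R) := by rw [hAR', mul_one]
    _ = (star R * A) * R := by rw [mul_assoc]
    _ = R := by rw [h1, one_mul]
  have hsa : IsSelfAdjoint (P ∘L R) := by
    show star (P * R) = P * R
    rw [star_mul, hRstar, hstarP, ← hPR]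
  refine ⟨hsa, ?_, ?_⟩
  · show (P * R) * (P * R) = P * R
    calc (P * R) * (P * R) = P * (R * P) * R := by noncomm_ring
    _ = P * (Q * R) * R := by rw [hRP]
    _ = (P * Q) * (R * R) := by noncomm_ring
    _ = (P * A) * (R * R) := by rw [hPA]
    _ = P * (A * R) * R := by noncomm_ring
    _ = P * R := by rw [hAR', mul_one]
  · have hPRA : (P * R) * A = P := by
      rw [mul_assoc, hRA', mul_one]
    ext y
    simp only [LinearMap.mem_range, ContinuousLinearMap.coe_coe]
    constructor
    · rintro ⟨x, rfl⟩
      exact ⟨R x, rfl⟩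
    · rintro ⟨x, rfl⟩
      refine ⟨A x, ?_⟩
      have := congrFun (congrArg (DFunLike.coe) hPRA) x
      simpa using this
end

section
/- Let H be a Hilbert space. The set of complementary pairs of closed subspaces is open in Gr(H) × Gr(H) with the gap topology: if (L, M) is a complementary pair of closed subspaces of H, then there exists ε > 0 such that for all closed subspaces L', M' with ‖P_L - P_{L'}‖ < ε and ‖P_M - P_{M'}‖ < ε, the pair (L', M') is also complementary. -/
/-- (Openness of the set of complementary pairs in the gap topology.)
If `(L, M)` is a complementary pair of closed subspaces of a Hilbert space `H`, then
there is `ε > 0` such that every pair `(L', M')` of closed subspaces whose orthogonal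
projections are within `ε` of those of `L` and `M` (in operator norm) is also
complementary.  The orthogonal projections onto `L'` and `M'` are characterized as
self-adjoint idempotents with the corresponding ranges. -/
theorem stmt5 {H : Type*} [NormedAddCommGroup H] [InnerProductSpace ℂ H] [CompleteSpace H]
    (L M : Submodule ℂ H) [CompleteSpace L] [CompleteSpace M]
    (h : IsCompl L M) :
    ∃ ε > (0 : ℝ), ∀ (L' M' : Submodule ℂ H) (PL' PM' : H →L[ℂ] H),
      IsSelfAdjoint PL' → PL' ∘L PL' = PL' → LinearMap.range (PL' : H →ₗ[ℂ] H) = L' →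
      IsSelfAdjoint PM' → PM' ∘L PM' = PM' → LinearMap.range (PM' : H →ₗ[ℂ] H) = M' →
      ‖L.subtypeL ∘L L.orthogonalProjectionOnto - PL'‖ < ε →
      ‖M.subtypeL ∘L M.orthogonalProjectionOnto - PM'‖ < ε →
      IsCompl L' M' := by
  have hLc : IsClosed (L : Set H) :=
    (completeSpace_coe_iff_isComplete.mp (inferInstance : CompleteSpace L)).isClosed
  have hMc : IsClosed (M : Set H) :=
    (completeSpace_coe_iff_isComplete.mp (inferInstance : CompleteSpace M)).isClosed
  -- the continuous projection onto `L` along `M`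
  set E : H →L[ℂ] H := L.subtypeL ∘L L.linearProjOfClosedCompl M h hLc hMc with hE
  set F : H →L[ℂ] H := ContinuousLinearMap.id ℂ H - E with hF
  have hEmemL : ∀ x : H, E x ∈ L := fun x => (L.linearProjOfClosedCompl M h hLc hMc x).2
  have hEL : ∀ x ∈ L, E x = x := by
    intro x hx
    simp [hE, ContinuousLinearMap.comp_apply,
      Submodule.coe_continuous_linearProjOfClosedCompl',
      Submodule.linearProjOfIsCompl_apply_left h ⟨x, hx⟩]
  have hEM : ∀ x ∈ M, E x = 0 := by
    intro x hx
    simp [hE, ContinuousLinearMap.comp_apply,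
      Submodule.coe_continuous_linearProjOfClosedCompl',
      Submodule.linearProjOfIsCompl_apply_right' h hx]
  have hFmemM : ∀ x : H, F x ∈ M := by
    intro x
    obtain ⟨u, hu, v, hv, hx⟩ := Submodule.mem_sup.mp
      (by rw [h.sup_eq_top]; trivial : x ∈ L ⊔ M)
    have hEx : E x = u := by
      have : E (u + v) = u := by
        rw [map_add, hEL u hu, hEM v hv, add_zero]
      rwa [hx] at this
    have : F x = v := by
      rw [hF, ContinuousLinearMap.sub_apply, ContinuousLinearMap.id_apply, hEx, ← hx]
      abel
    rw [this]; exact hv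
  set C : ℝ := ‖E‖ + ‖F‖ with hC
  have hC0 : 0 ≤ C := by positivity
  refine ⟨1 / (2 * (C + 1)), by positivity, ?_⟩
  intro L' M' PL' PM' _ hPL'idem hPL'range _ hPM'idem hPM'range hL' hM'
  set ε : ℝ := 1 / (2 * (C + 1)) with hε
  set PL : H →L[ℂ] H := L.subtypeL ∘L L.orthogonalProjectionOnto with hPL
  set PM : H →L[ℂ] H := M.subtypeL ∘L M.orthogonalProjectionOnto with hPM
  have hPLfix : ∀ x ∈ L, PL x = x := by
    intro x hx
    simp [hPL, ContinuousLinearMap.comp_apply, L.orthogonalProjectionOnto_mem_subspace_eq_self ⟨x, hx⟩]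
  have hPMfix : ∀ x ∈ M, PM x = x := by
    intro x hx
    simp [hPM, ContinuousLinearMap.comp_apply, M.orthogonalProjectionOnto_mem_subspace_eq_self ⟨x, hx⟩]
  have hPLmem : ∀ x : H, PL x ∈ L := fun x => (L.orthogonalProjectionOnto x).2
  have hPMmem : ∀ x : H, PM x ∈ M := fun x => (M.orthogonalProjectionOnto x).2
  -- fixed points of the idempotents
  have hfixL' : ∀ x ∈ L', PL' x = x := by
    intro x hx
    rw [← hPL'range] at hx
    obtain ⟨y, hy⟩ := hx
    rw [← hy, ContinuousLinearMap.coe_coe, ← ContinuousLinearMap.comp_apply, hPL'idem]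
  have hfixM' : ∀ x ∈ M', PM' x = x := by
    intro x hx
    rw [← hPM'range] at hx
    obtain ⟨y, hy⟩ := hx
    rw [← hy, ContinuousLinearMap.coe_coe, ← ContinuousLinearMap.comp_apply, hPM'idem]
  constructor
  · -- disjointness
    rw [Submodule.disjoint_def]
    intro x hxL hxM
    have h1 : ‖E x‖ ≤ ‖E‖ * (ε * ‖x‖) := by
      have hxM' : E x = E (x - PM x) := by
        rw [map_sub, hEM _ (hPMmem x), sub_zero]
      have hd : x - PM x = -((PM - PM') x) := by
        rw [ContinuousLinearMap.sub_apply, hfixM' x hxM]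
        abel
      calc ‖E x‖ = ‖E (x - PM x)‖ := by rw [hxM']
        _ ≤ ‖E‖ * ‖x - PM x‖ := E.le_opNorm _
        _ ≤ ‖E‖ * (ε * ‖x‖) := by
            refine mul_le_mul_of_nonneg_left ?_ (norm_nonneg _)
            rw [hd, norm_neg]
            calc ‖(PM - PM') x‖ ≤ ‖PM - PM'‖ * ‖x‖ := (PM - PM').le_opNorm x
              _ ≤ ε * ‖x‖ := mul_le_mul_of_nonneg_right hM'.le (norm_nonneg x)
    have h2 : ‖F x‖ ≤ ‖F‖ * (ε * ‖x‖) := by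
      have hxL' : F x = F (x - PL x) := by
        have : F (PL x) = 0 := by
          simp [hF, ContinuousLinearMap.sub_apply, hEL _ (hPLmem x)]
        rw [map_sub, this, sub_zero]
      have hd : x - PL x = -((PL - PL') x) := by
        rw [ContinuousLinearMap.sub_apply, hfixL' x hxL]
        abel
      calc ‖F x‖ = ‖F (x - PL x)‖ := by rw [hxL']
        _ ≤ ‖F‖ * ‖x - PL x‖ := F.le_opNorm _
        _ ≤ ‖F‖ * (ε * ‖x‖) := by
            refine mul_le_mul_of_nonneg_left ?_ (norm_nonneg _)
            rw [hd, norm_neg]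
            calc ‖(PL - PL') x‖ ≤ ‖PL - PL'‖ * ‖x‖ := (PL - PL').le_opNorm x
              _ ≤ ε * ‖x‖ := mul_le_mul_of_nonneg_right hL'.le (norm_nonneg x)
    have hsum : ‖x‖ ≤ C * (ε * ‖x‖) := by
      have : x = E x + F x := by simp [hF, ContinuousLinearMap.sub_apply]
      calc ‖x‖ = ‖E x + F x‖ := by rw [← this]
        _ ≤ ‖E x‖ + ‖F x‖ := norm_add_le _ _
        _ ≤ ‖E‖ * (ε * ‖x‖) + ‖F‖ * (ε * ‖x‖) := add_le_add h1 h2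
        _ = C * (ε * ‖x‖) := by ring
    have hCε : C * ε ≤ 1 / 2 := by
      rw [hε, mul_one_div, div_le_div_iff₀ (by positivity) (by norm_num)]
      nlinarith
    have hsum' : ‖x‖ ≤ (C * ε) * ‖x‖ := by rw [mul_assoc]; exact hsum
    have h12 : C * ε * ‖x‖ ≤ 1 / 2 * ‖x‖ := mul_le_mul_of_nonneg_right hCε (norm_nonneg x)
    have hx0 : ‖x‖ ≤ 0 := by linarith [hsum'.trans h12]
    exact norm_le_zero_iff.mp hx0
  · -- codisjointness
    set T : H →L[ℂ] H := PL' ∘L E + PM' ∘L F with hT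
    have hkey : (1 : H →L[ℂ] H) - T = (PL - PL') ∘L E + (PM - PM') ∘L F := by
      ext x
      have hx : x = PL (E x) + PM (F x) := by
        rw [hPLfix _ (hEmemL x), hPMfix _ (hFmemM x)]
        simp [hF, ContinuousLinearMap.sub_apply]
      simp only [ContinuousLinearMap.sub_apply, ContinuousLinearMap.add_apply,
        ContinuousLinearMap.comp_apply, ContinuousLinearMap.one_apply]
      rw [hT]
      simp only [ContinuousLinearMap.add_apply, ContinuousLinearMap.comp_apply]
      nth_rewrite 1 [hx]
      abel
    have hnorm : ‖(1 : H →L[ℂ] H) - T‖ < 1 := by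
      rw [hkey]
      calc ‖(PL - PL') ∘L E + (PM - PM') ∘L F‖
          ≤ ‖(PL - PL') ∘L E‖ + ‖(PM - PM') ∘L F‖ := norm_add_le _ _
        _ ≤ ‖PL - PL'‖ * ‖E‖ + ‖PM - PM'‖ * ‖F‖ :=
            add_le_add ((PL - PL').opNorm_comp_le E) ((PM - PM').opNorm_comp_le F)
        _ ≤ ε * ‖E‖ + ε * ‖F‖ :=
            add_le_add (mul_le_mul_of_nonneg_right hL'.le (norm_nonneg _))
              (mul_le_mul_of_nonneg_right hM'.le (norm_nonneg _))
        _ = ε * C := by ring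
        _ < 1 := by
            rw [hε, div_mul_eq_mul_div, one_mul, div_lt_one (by positivity)]
            nlinarith
    -- `T` is invertible
    have hu : IsUnit T := by
      have := isUnit_one_sub_of_norm_lt_one hnorm
      rwa [sub_sub_cancel] at this
    obtain ⟨u, hu⟩ := hu
    rw [codisjoint_iff]
    rw [eq_top_iff]
    intro x _
    have hx : T ((↑u⁻¹ : H →L[ℂ] H) x) = x := by
      have : ((u : H →L[ℂ] H) * (↑u⁻¹ : H →L[ℂ] H)) x = x := by
        rw [u.mul_inv]; rfl
      rwa [ContinuousLinearMap.mul_apply, hu] at this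
    rw [← hx, hT]
    simp only [ContinuousLinearMap.add_apply, ContinuousLinearMap.comp_apply]
    exact Submodule.add_mem_sup (hPL'range ▸ LinearMap.mem_range_self _ _)
      (hPM'range ▸ LinearMap.mem_range_self _ _)
end

section
/- Let H and H' be Hilbert spaces. The map B(H, H') × Gr(H) → Gr(H ⊕ H') sending a bounded operator A and a closed subspace D to the graph of the restriction of A to D is continuous, where Gr carries the gap topology (operator norm distance between orthogonal projections). -/
open scoped ComplexConjugate InnerProductSpace

section Aux

variable {E : Type*} [NormedAddCommGroup E] [InnerProductSpace ℂ E] [CompleteSpace E]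

lemma aux_inner_move (P : E →L[ℂ] E) (hP : IsSelfAdjoint P) (x y : E) :
    ⟪P x, y⟫_ℂ = ⟪x, P y⟫_ℂ := by
  rw [ContinuousLinearMap.isSelfAdjoint_iff'] at hP
  conv_lhs => rw [← hP]
  exact ContinuousLinearMap.adjoint_inner_left P y x

lemma aux_contraction (P : E →L[ℂ] E) (hP : IsSelfAdjoint P) (hPi : P ∘L P = P) (x : E) :
    ‖P x‖ ≤ ‖x‖ := by
  rcases eq_or_lt_of_le (norm_nonneg (P x)) with h0 | h0
  · rw [← h0]; exact norm_nonneg x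
  have h1 : ‖P x‖ ^ 2 = ‖⟪P x, P x⟫_ℂ‖ := by
    rw [inner_self_eq_norm_sq_to_K]; push_cast; simp [sq, abs_of_nonneg, norm_nonneg]
  have h2 : ⟪P x, P x⟫_ℂ = ⟪x, P x⟫_ℂ := by
    rw [aux_inner_move P hP]
    congr 1
    have := congrArg (fun T : E →L[ℂ] E => T x) hPi
    simpa using this
  have h3 : ‖⟪x, P x⟫_ℂ‖ ≤ ‖x‖ * ‖P x‖ := norm_inner_le_norm x (P x)
  nlinarith [h1, h2 ▸ h1, h3]

lemma aux_fix (P : E →L[ℂ] E) (hPi : P ∘L P = P) {x : E}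
    (hx : x ∈ LinearMap.range (P : E →ₗ[ℂ] E)) : P x = x := by
  obtain ⟨y, rfl⟩ := hx
  have := congrArg (fun T : E →L[ℂ] E => T y) hPi
  simpa using this

lemma aux_one_sub_sa (P : E →L[ℂ] E) (hP : IsSelfAdjoint P) : IsSelfAdjoint (1 - P) :=
  (IsSelfAdjoint.one (E →L[ℂ] E)).sub hP

lemma aux_one_sub_idem (P : E →L[ℂ] E) (hPi : P ∘L P = P) : (1 - P) ∘L (1 - P) = 1 - P := by
  have h : IsIdempotentElem P := hPi
  exact h.one_sub

lemma aux_pyth (Q : E →L[ℂ] E) (hQs : IsSelfAdjoint Q) (hQi : Q ∘L Q = Q) (x : E) :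
    ‖Q x‖ ^ 2 + ‖x - Q x‖ ^ 2 = ‖x‖ ^ 2 := by
  have horth : ⟪Q x, x - Q x⟫_ℂ = 0 := by
    rw [aux_inner_move Q hQs, map_sub, aux_fix Q hQi (x := Q x) ⟨x, rfl⟩, sub_self, inner_zero_right]
  have hx : x = Q x + (x - Q x) := by abel
  calc ‖Q x‖ ^ 2 + ‖x - Q x‖ ^ 2
      = ‖Q x‖ ^ 2 + 2 * (RCLike.re ⟪Q x, x - Q x⟫_ℂ) + ‖x - Q x‖ ^ 2 := by
        rw [horth]; simp
    _ = ‖Q x + (x - Q x)‖ ^ 2 := (norm_add_sq (𝕜 := ℂ) _ _).symm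
    _ = ‖x‖ ^ 2 := by rw [← hx]

lemma aux_gap_le (Q Q' : E →L[ℂ] E)
    (hQs : IsSelfAdjoint Q) (hQi : Q ∘L Q = Q)
    (hQ's : IsSelfAdjoint Q') (hQ'i : Q' ∘L Q' = Q')
    (c : ℝ) (hc : 0 ≤ c)
    (h : ∀ x, ‖Q x - Q' (Q x)‖ ≤ c * ‖Q x‖)
    (h' : ∀ x, ‖Q' x - Q (Q' x)‖ ≤ c * ‖Q' x‖) :
    ‖Q - Q'‖ ≤ c := by
  set S : E →L[ℂ] E := Q' ∘L (1 - Q) with hS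
  -- ‖(1-Q) ∘L Q'‖ ≤ c
  have hT : ‖(1 - Q) ∘L Q'‖ ≤ c := by
    refine ContinuousLinearMap.opNorm_le_bound _ hc (fun x => ?_)
    have : ((1 - Q) ∘L Q') x = Q' x - Q (Q' x) := by
      simp [ContinuousLinearMap.sub_apply]
    rw [this]
    exact le_trans (h' x) (by
      have := aux_contraction Q' hQ's hQ'i x
      nlinarith)
  have hSadj : S = ContinuousLinearMap.adjoint ((1 - Q) ∘L Q') := by
    rw [ContinuousLinearMap.adjoint_comp]
    rw [ContinuousLinearMap.isSelfAdjoint_iff'.mp hQ's,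
        ContinuousLinearMap.isSelfAdjoint_iff'.mp (aux_one_sub_sa Q hQs)]
  have hSnorm : ‖S‖ ≤ c := by
    rw [hSadj]
    rw [LinearIsometryEquiv.norm_map ContinuousLinearMap.adjoint ((1 - Q) ∘L Q')]
    exact hT
  have hSbound : ∀ x, ‖S x‖ ≤ c * ‖x - Q x‖ := by
    intro x
    have h1 : S x = S (x - Q x) := by
      have := congrArg (fun T : E →L[ℂ] E => Q' ∘L T) (aux_one_sub_idem Q hQi)
      have h2 := congrArg (fun T : E →L[ℂ] E => T x) this
      simp only [ContinuousLinearMap.comp_apply, ContinuousLinearMap.sub_apply,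
        ContinuousLinearMap.one_apply] at h2
      simpa [hS, ContinuousLinearMap.comp_apply, ContinuousLinearMap.sub_apply,
        ContinuousLinearMap.one_apply] using h2.symm
    rw [h1]
    calc ‖S (x - Q x)‖ ≤ ‖S‖ * ‖x - Q x‖ := S.le_opNorm _
      _ ≤ c * ‖x - Q x‖ := by
          have := norm_nonneg (x - Q x); nlinarith
  refine ContinuousLinearMap.opNorm_le_bound _ hc (fun x => ?_)
  have hdec : (Q - Q') x = (Q x - Q' (Q x)) - S x := by
    simp [hS, ContinuousLinearMap.sub_apply, ContinuousLinearMap.comp_apply]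
  have horth : ⟪Q x - Q' (Q x), S x⟫_ℂ = 0 := by
    have h1 : Q x - Q' (Q x) = (1 - Q') (Q x) := by
      simp [ContinuousLinearMap.sub_apply]
    have h2 : ⟪(1 - Q') (Q x), S x⟫_ℂ = ⟪Q x, (1 - Q') (S x)⟫_ℂ :=
      aux_inner_move (1 - Q') (aux_one_sub_sa Q' hQ's) _ _
    have h3 : (1 - Q') (S x) = 0 := by
      have hfix : Q' (S x) = S x := by
        have h4 := congrArg (fun T : E →L[ℂ] E => T ((1 - Q) x)) hQ'i
        simp only [ContinuousLinearMap.comp_apply] at h4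
        have h5 : S x = Q' ((1 - Q) x) := rfl
        rw [h5, h4]
      simp [ContinuousLinearMap.sub_apply, hfix]
    rw [h1, h2, h3, inner_zero_right]
  have hpyth : ‖(Q - Q') x‖ ^ 2 = ‖Q x - Q' (Q x)‖ ^ 2 + ‖S x‖ ^ 2 := by
    rw [hdec, norm_sub_sq (𝕜 := ℂ), horth]
    simp
  have e1 := h x
  have e2 := hSbound x
  have e3 := aux_pyth Q hQs hQi x
  have n1 := norm_nonneg ((Q - Q') x)
  have n2 := norm_nonneg x
  have n3 := norm_nonneg (Q x)
  have n4 := norm_nonneg (x - Q x)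
  have n5 := norm_nonneg (S x)
  have n6 := norm_nonneg (Q x - Q' (Q x))
  have hb2 : ‖Q x - Q' (Q x)‖ ^ 2 ≤ c ^ 2 * ‖Q x‖ ^ 2 := by nlinarith
  have hs2 : ‖S x‖ ^ 2 ≤ c ^ 2 * ‖x - Q x‖ ^ 2 := by nlinarith
  have ha2 : ‖(Q - Q') x‖ ^ 2 ≤ (c * ‖x‖) ^ 2 := by nlinarith
  nlinarith [mul_nonneg hc n2]


end Aux

/-- The graph of the restriction of `A` to `D`, as a closed subspace of the
Hilbert-space direct sum `H ⊕ H'` (modeled by `WithLp 2 (H × H')`). -/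
noncomputable def graphSub {H H' : Type*}
    [NormedAddCommGroup H] [InnerProductSpace ℂ H]
    [NormedAddCommGroup H'] [InnerProductSpace ℂ H']
    (A : H →L[ℂ] H') (D : Submodule ℂ H) : Submodule ℂ (WithLp 2 (H × H')) :=
  Submodule.comap ((WithLp.linearEquiv 2 ℂ (H × H')).toLinearMap)
    (Submodule.map (LinearMap.prod LinearMap.id A.toLinearMap) D)

lemma mem_graphSub {H H' : Type*}
    [NormedAddCommGroup H] [InnerProductSpace ℂ H]
    [NormedAddCommGroup H'] [InnerProductSpace ℂ H']
    {A : H →L[ℂ] H'} {D : Submodule ℂ H} {y : WithLp 2 (H × H')} :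
    y ∈ graphSub A D ↔ ∃ u ∈ D, u = y.fst ∧ A u = y.snd := by
  constructor
  · rintro ⟨u, huD, hu⟩
    exact ⟨u, huD, congrArg Prod.fst hu, congrArg Prod.snd hu⟩
  · rintro ⟨u, huD, h1, h2⟩
    exact ⟨u, huD, Prod.ext h1 h2⟩


set_option maxHeartbeats 1000000 in
/-- Let `H`, `H'` be Hilbert spaces. The map
`B(H, H') × Gr(H) → Gr(H ⊕ H')` sending a bounded operator `A` and a closed subspace
`D` to the graph of `A|_D` is continuous for the gap topology (operator-norm distance
between orthogonal projections), stated here in `ε`-`δ` form, with orthogonal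
projections characterized as self-adjoint idempotents with the given ranges. -/
theorem stmt6 {H H' : Type*}
    [NormedAddCommGroup H] [InnerProductSpace ℂ H] [CompleteSpace H]
    [NormedAddCommGroup H'] [InnerProductSpace ℂ H'] [CompleteSpace H']
    (A : H →L[ℂ] H') (D : Submodule ℂ H) (hD : IsClosed (D : Set H))
    (ε : ℝ) (hε : 0 < ε) :
    ∃ δ > (0 : ℝ), ∀ (A' : H →L[ℂ] H') (D' : Submodule ℂ H), IsClosed (D' : Set H) →
      ∀ (PD PD' : H →L[ℂ] H)
        (PG PG' : WithLp 2 (H × H') →L[ℂ] WithLp 2 (H × H')),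
      IsSelfAdjoint PD → PD ∘L PD = PD → LinearMap.range (PD : H →ₗ[ℂ] H) = D →
      IsSelfAdjoint PD' → PD' ∘L PD' = PD' → LinearMap.range (PD' : H →ₗ[ℂ] H) = D' →
      IsSelfAdjoint PG → PG ∘L PG = PG → LinearMap.range (PG : WithLp 2 (H × H') →ₗ[ℂ] WithLp 2 (H × H')) = graphSub A D →
      IsSelfAdjoint PG' → PG' ∘L PG' = PG' → LinearMap.range (PG' : WithLp 2 (H × H') →ₗ[ℂ] WithLp 2 (H × H')) = graphSub A' D' →
      ‖A - A'‖ < δ → ‖PD - PD'‖ < δ → ‖PG - PG'‖ < ε := by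
  set M : ℝ := ‖A‖ + 3 with hM
  have hM0 : 0 < M := by positivity
  set δ : ℝ := min 1 (ε / (2 * M)) with hδdef
  have hδ0 : 0 < δ := lt_min one_pos (by positivity)
  have hδ1 : δ ≤ 1 := min_le_left _ _
  refine ⟨δ, hδ0, ?_⟩
  intro A' D' hD' PD PD' PG PG' hPDs hPDi hPDr hPD's hPD'i hPD'r
    hPGs hPGi hPGr hPG's hPG'i hPG'r hAA hPP
  set E := WithLp 2 (H × H')
  set c : ℝ := δ * M with hc
  have hc0 : 0 ≤ c := le_of_lt (by positivity)
  have hcε : c < ε := by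
    have h1 : δ ≤ ε / (2 * M) := min_le_right _ _
    have : c ≤ ε / 2 := by
      rw [hc]
      calc δ * M ≤ (ε / (2 * M)) * M := by nlinarith
        _ = ε / 2 := by field_simp
    linarith
  -- helper: distance to a fixed point of a projection
  have key : ∀ (Q : E →L[ℂ] E), IsSelfAdjoint Q → Q ∘L Q = Q →
      ∀ y z : E, Q z = z → ‖y - Q y‖ ≤ ‖y - z‖ := by
    intro Q hQs hQi y z hz
    have h1 : y - Q y = (1 - Q) (y - z) := by
      simp only [ContinuousLinearMap.sub_apply, ContinuousLinearMap.one_apply, map_sub, hz]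
      abel
    rw [h1]
    exact aux_contraction (1 - Q) (aux_one_sub_sa Q hQs) (aux_one_sub_idem Q hQi) _
  have norm_prod_le : ∀ w : E, ‖w‖ ≤ ‖w.fst‖ + ‖w.snd‖ := by
    intro w
    have h := WithLp.prod_norm_sq_eq_of_L2 w
    nlinarith [norm_nonneg w, norm_nonneg w.fst, norm_nonneg w.snd]
  have fst_le : ∀ w : E, ‖w.fst‖ ≤ ‖w‖ := by
    intro w
    have h := WithLp.prod_norm_sq_eq_of_L2 w
    nlinarith [norm_nonneg w, norm_nonneg w.fst, norm_nonneg w.snd]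
  have hAA' : ‖A - A'‖ ≤ δ := le_of_lt hAA
  have hPP' : ‖PD - PD'‖ ≤ δ := le_of_lt hPP
  have hPD'c : ∀ v : H, ‖PD' v‖ ≤ ‖v‖ := aux_contraction PD' hPD's hPD'i
  have hPDc : ∀ v : H, ‖PD v‖ ≤ ‖v‖ := aux_contraction PD hPDs hPDi
  refine lt_of_le_of_lt (aux_gap_le PG PG' hPGs hPGi hPG's hPG'i c hc0 ?_ ?_) hcε
  · -- forward direction
    intro x
    set y : E := PG x with hy
    have hymem : y ∈ graphSub A D := hPGr ▸ ⟨x, rfl⟩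
    obtain ⟨u, huD, hu1, hu2⟩ := mem_graphSub.mp hymem
    set z : E := (WithLp.equiv 2 (H × H')).symm (PD' u, A' (PD' u)) with hz
    have hzmem : z ∈ graphSub A' D' :=
      mem_graphSub.mpr ⟨PD' u, hPD'r ▸ ⟨u, rfl⟩, rfl, rfl⟩
    have hzfix : PG' z = z := aux_fix PG' hPG'i (by rw [hPG'r]; exact hzmem)
    have step1 : ‖y - PG' y‖ ≤ ‖y - z‖ := key PG' hPG's hPG'i y z hzfix
    have hfst : (y - z).fst = u - PD' u := by
      have : (y - z).fst = y.fst - z.fst := rfl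
      rw [this, ← hu1]; rfl
    have hsnd : (y - z).snd = A u - A' (PD' u) := by
      have : (y - z).snd = y.snd - z.snd := rfl
      rw [this, ← hu2]; rfl
    have hPDu : PD u = u := aux_fix PD hPDi (by rw [hPDr]; exact huD)
    have ha : ‖u - PD' u‖ ≤ δ * ‖u‖ := by
      have h1 : u - PD' u = (PD - PD') u := by
        simp [ContinuousLinearMap.sub_apply, hPDu]
      rw [h1]
      calc ‖(PD - PD') u‖ ≤ ‖PD - PD'‖ * ‖u‖ := (PD - PD').le_opNorm u
        _ ≤ δ * ‖u‖ := by nlinarith [norm_nonneg u]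
    have hb : ‖A u - A' (PD' u)‖ ≤ (‖A‖ + 1) * (δ * ‖u‖) := by
      have h1 : ‖A u - A (PD' u)‖ ≤ ‖A‖ * (δ * ‖u‖) := by
        have : A u - A (PD' u) = A (u - PD' u) := by rw [map_sub]
        rw [this]
        calc ‖A (u - PD' u)‖ ≤ ‖A‖ * ‖u - PD' u‖ := A.le_opNorm _
          _ ≤ ‖A‖ * (δ * ‖u‖) := by nlinarith [norm_nonneg A, ha]
      have h2 : ‖A (PD' u) - A' (PD' u)‖ ≤ δ * ‖u‖ := by
        have : A (PD' u) - A' (PD' u) = (A - A') (PD' u) := by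
          simp [ContinuousLinearMap.sub_apply]
        rw [this]
        calc ‖(A - A') (PD' u)‖ ≤ ‖A - A'‖ * ‖PD' u‖ := (A - A').le_opNorm _
          _ ≤ δ * ‖u‖ := by nlinarith [norm_nonneg (PD' u), hPD'c u, norm_nonneg (A - A'), norm_nonneg u]
      calc ‖A u - A' (PD' u)‖ ≤ ‖A u - A (PD' u)‖ + ‖A (PD' u) - A' (PD' u)‖ :=
            norm_sub_le_norm_sub_add_norm_sub _ _ _
        _ ≤ (‖A‖ + 1) * (δ * ‖u‖) := by nlinarith
    have hunorm : ‖u‖ ≤ ‖y‖ := by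
      have := fst_le y
      rw [← hu1] at this
      exact this
    calc ‖PG x - PG' (PG x)‖ = ‖y - PG' y‖ := rfl
      _ ≤ ‖y - z‖ := step1
      _ ≤ ‖(y - z).fst‖ + ‖(y - z).snd‖ := norm_prod_le _
      _ = ‖u - PD' u‖ + ‖A u - A' (PD' u)‖ := by rw [hfst, hsnd]
      _ ≤ δ * ‖u‖ + (‖A‖ + 1) * (δ * ‖u‖) := by linarith
      _ ≤ c * ‖y‖ := by
          rw [hc, hM]
          nlinarith [mul_le_mul_of_nonneg_left
              (mul_le_mul_of_nonneg_left hunorm hδ0.le)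
              (by positivity : (0:ℝ) ≤ ‖A‖ + 2),
            mul_nonneg hδ0.le (norm_nonneg y)]
      _ = c * ‖PG x‖ := rfl
  · -- backward direction
    intro x
    set y : E := PG' x with hy
    have hymem : y ∈ graphSub A' D' := hPG'r ▸ ⟨x, rfl⟩
    obtain ⟨u, huD, hu1, hu2⟩ := mem_graphSub.mp hymem
    set z : E := (WithLp.equiv 2 (H × H')).symm (PD u, A (PD u)) with hz
    have hzmem : z ∈ graphSub A D :=
      mem_graphSub.mpr ⟨PD u, hPDr ▸ ⟨u, rfl⟩, rfl, rfl⟩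
    have hzfix : PG z = z := aux_fix PG hPGi (by rw [hPGr]; exact hzmem)
    have step1 : ‖y - PG y‖ ≤ ‖y - z‖ := key PG hPGs hPGi y z hzfix
    have hfst : (y - z).fst = u - PD u := by
      have : (y - z).fst = y.fst - z.fst := rfl
      rw [this, ← hu1]; rfl
    have hsnd : (y - z).snd = A' u - A (PD u) := by
      have : (y - z).snd = y.snd - z.snd := rfl
      rw [this, ← hu2]; rfl
    have hPD'u : PD' u = u := aux_fix PD' hPD'i (by rw [hPD'r]; exact huD)
    have ha : ‖u - PD u‖ ≤ δ * ‖u‖ := by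
      have h1 : u - PD u = (PD' - PD) u := by
        simp [ContinuousLinearMap.sub_apply, hPD'u]
      rw [h1]
      calc ‖(PD' - PD) u‖ ≤ ‖PD' - PD‖ * ‖u‖ := (PD' - PD).le_opNorm u
        _ ≤ δ * ‖u‖ := by
            rw [norm_sub_rev]
            nlinarith [norm_nonneg u]
    have hb : ‖A' u - A (PD u)‖ ≤ (‖A‖ + 1) * (δ * ‖u‖) := by
      have h1 : ‖A' u - A u‖ ≤ δ * ‖u‖ := by
        have : A' u - A u = -((A - A') u) := by
          simp [ContinuousLinearMap.sub_apply]
        rw [this, norm_neg]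
        calc ‖(A - A') u‖ ≤ ‖A - A'‖ * ‖u‖ := (A - A').le_opNorm _
          _ ≤ δ * ‖u‖ := by nlinarith [norm_nonneg u]
      have h2 : ‖A u - A (PD u)‖ ≤ ‖A‖ * (δ * ‖u‖) := by
        have : A u - A (PD u) = A (u - PD u) := by rw [map_sub]
        rw [this]
        calc ‖A (u - PD u)‖ ≤ ‖A‖ * ‖u - PD u‖ := A.le_opNorm _
          _ ≤ ‖A‖ * (δ * ‖u‖) := by nlinarith [norm_nonneg A, ha]
      calc ‖A' u - A (PD u)‖ ≤ ‖A' u - A u‖ + ‖A u - A (PD u)‖ :=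
            norm_sub_le_norm_sub_add_norm_sub _ _ _
        _ ≤ (‖A‖ + 1) * (δ * ‖u‖) := by nlinarith
    have hunorm : ‖u‖ ≤ ‖y‖ := by
      have := fst_le y
      rw [← hu1] at this
      exact this
    calc ‖PG' x - PG (PG' x)‖ = ‖y - PG y‖ := rfl
      _ ≤ ‖y - z‖ := step1
      _ ≤ ‖(y - z).fst‖ + ‖(y - z).snd‖ := norm_prod_le _
      _ = ‖u - PD u‖ + ‖A' u - A (PD u)‖ := by rw [hfst, hsnd]
      _ ≤ δ * ‖u‖ + (‖A‖ + 1) * (δ * ‖u‖) := by linarith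
      _ ≤ c * ‖y‖ := by
          rw [hc, hM]
          nlinarith [mul_le_mul_of_nonneg_left
              (mul_le_mul_of_nonneg_left hunorm hδ0.le)
              (by positivity : (0:ℝ) ≤ ‖A‖ + 2),
            mul_nonneg hδ0.le (norm_nonneg y)]
      _ = c * ‖PG' x‖ := rfl
end

section
/- Let j : W → H be an injective bounded linear map of Hilbert spaces, L a closed subspace of W with L' = j(L) closed in H, and M' a closed complement of L' in H with M = j⁻¹(M'). Then for every closed subspace N of W complementary to M, the image j(N) is a closed subspace of H, and the projection of H onto j(N) along M' equals j ∘ P_{N,M} ∘ (j|_L)⁻¹ ∘ Q', where P_{N,M} is the projection of W onto N along M and Q' is the projection of H onto L' along M'. -/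
/-- Let `j : W → H` be an injective bounded linear map of Hilbert
spaces, `L` a closed subspace of `W` with `L' = j(L)` closed in `H`, `M'` a closed
complement of `L'` in `H`, and `M = j⁻¹(M')`. Then for every closed subspace `N` of
`W` complementary to `M`, the image `j(N)` is closed in `H`, and the projection of
`H` onto `j(N)` along `M'` equals `j ∘ P_{N,M} ∘ (j|_L)⁻¹ ∘ Q'`, where `P_{N,M}` is
the projection of `W` onto `N` along `M` and `Q'` is the projection of `H` onto `L'`
along `M'`.  Here `K = (j|_L)⁻¹ ∘ Q'` is characterized by `K x ∈ L` and
`j (K x) = Q' x` for all `x`. -/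
theorem stmt8 {W H : Type*}
    [NormedAddCommGroup W] [InnerProductSpace ℂ W] [CompleteSpace W]
    [NormedAddCommGroup H] [InnerProductSpace ℂ H] [CompleteSpace H]
    (j : W →L[ℂ] H) (hj : Function.Injective j)
    (L : Submodule ℂ W) (hL : IsClosed (L : Set W))
    (hL' : IsClosed ((Submodule.map (j : W →ₗ[ℂ] H) L : Submodule ℂ H) : Set H))
    (M' : Submodule ℂ H) (hM' : IsClosed (M' : Set H))
    (hcompl : IsCompl (Submodule.map (j : W →ₗ[ℂ] H) L) M')
    (N : Submodule ℂ W) (hN : IsClosed (N : Set W))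
    (hNcompl : IsCompl N (Submodule.comap (j : W →ₗ[ℂ] H) M'))
    (PNM : W →L[ℂ] W) (hP1 : PNM ∘L PNM = PNM) (hP2 : LinearMap.range (PNM : W →ₗ[ℂ] W) = N)
    (hP3 : LinearMap.ker (PNM : W →ₗ[ℂ] W) = Submodule.comap (j : W →ₗ[ℂ] H) M')
    (Q' : H →L[ℂ] H) (hQ1 : Q' ∘L Q' = Q')
    (hQ2 : LinearMap.range (Q' : H →ₗ[ℂ] H) = Submodule.map (j : W →ₗ[ℂ] H) L) (hQ3 : LinearMap.ker (Q' : H →ₗ[ℂ] H) = M')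
    (K : H →L[ℂ] W) (hK : ∀ x, K x ∈ L ∧ j (K x) = Q' x) :
    IsClosed ((Submodule.map (j : W →ₗ[ℂ] H) N : Submodule ℂ H) : Set H) ∧
    (j ∘L PNM ∘L K) ∘L (j ∘L PNM ∘L K) = j ∘L PNM ∘L K ∧
    LinearMap.range (j ∘L PNM ∘L K : H →ₗ[ℂ] H) = Submodule.map (j : W →ₗ[ℂ] H) N ∧
    LinearMap.ker (j ∘L PNM ∘L K : H →ₗ[ℂ] H) = M' := by
  set R : H →L[ℂ] H := j ∘L PNM ∘L K with hR
  have hQidem : ∀ y, Q' (Q' y) = Q' y := by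
    intro y
    have := ContinuousLinearMap.ext_iff.mp hQ1 y
    simpa using this
  have hPidem : ∀ w, PNM (PNM w) = PNM w := by
    intro w
    have := ContinuousLinearMap.ext_iff.mp hP1 w
    simpa using this
  -- key identity
  have hPK : ∀ w : W, PNM (K (j w)) = PNM w := by
    intro w
    have hmem : K (j w) - w ∈ LinearMap.ker (PNM : W →ₗ[ℂ] W) := by
      rw [hP3, Submodule.mem_comap, map_sub, ContinuousLinearMap.coe_coe, (hK (j w)).2, ← hQ3,
        LinearMap.mem_ker, map_sub, ContinuousLinearMap.coe_coe, hQidem, sub_self]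
    have h0 : PNM (K (j w) - w) = 0 := hmem
    rw [map_sub, sub_eq_zero] at h0
    exact h0
  have hRapp : ∀ x, R x = j (PNM (K x)) := fun x => rfl
  have hjzero : ∀ w : W, j w = 0 ↔ w = 0 := by
    intro w
    constructor
    · intro h; exact hj (by simpa using h)
    · intro h; simp [h]
  -- kernel
  have hker : LinearMap.ker (R : H →ₗ[ℂ] H) = M' := by
    ext x
    rw [LinearMap.mem_ker, ContinuousLinearMap.coe_coe, hRapp, hjzero]
    constructor
    · intro h
      have hKmem : K x ∈ LinearMap.ker (PNM : W →ₗ[ℂ] W) := h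
      rw [hP3, Submodule.mem_comap, ContinuousLinearMap.coe_coe, (hK x).2, ← hQ3, LinearMap.mem_ker,
        ContinuousLinearMap.coe_coe, hQidem] at hKmem
      rw [← hQ3]; exact hKmem
    · intro h
      have hQx : Q' x = 0 := by rw [← hQ3] at h; exact h
      have : K x ∈ LinearMap.ker (PNM : W →ₗ[ℂ] W) := by
        rw [hP3, Submodule.mem_comap, ContinuousLinearMap.coe_coe, (hK x).2, hQx]; exact M'.zero_mem
      exact this
  -- range
  have hrange : LinearMap.range (R : H →ₗ[ℂ] H) = Submodule.map (j : W →ₗ[ℂ] H) N := by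
    ext x
    constructor
    · rintro ⟨y, rfl⟩
      exact ⟨PNM (K y), by rw [← hP2]; exact ⟨K y, rfl⟩, rfl⟩
    · rintro ⟨n, hn, rfl⟩
      refine ⟨j n, ?_⟩
      rw [ContinuousLinearMap.coe_coe, ContinuousLinearMap.coe_coe, hRapp, hPK]
      congr 1
      rw [← hP2] at hn
      obtain ⟨m, rfl⟩ := hn
      exact hPidem m
  -- idempotent
  have hidem : R ∘L R = R := by
    ext x
    simp only [ContinuousLinearMap.comp_apply]
    rw [hRapp, hRapp, hPK, hPidem]
  refine ⟨?_, hidem, hrange, hker⟩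
  -- closedness: j(N) = range R = ker (1 - R)
  have hrk : (Submodule.map (j : W →ₗ[ℂ] H) N : Set H) =
      (LinearMap.ker ((ContinuousLinearMap.id ℂ H - R : H →L[ℂ] H) : H →ₗ[ℂ] H) : Set H) := by
    ext x
    simp only [SetLike.mem_coe, LinearMap.mem_ker, ContinuousLinearMap.coe_coe, ContinuousLinearMap.sub_apply,
      ContinuousLinearMap.id_apply, sub_eq_zero]
    constructor
    · intro hx
      have : x ∈ LinearMap.range (R : H →ₗ[ℂ] H) := by rw [hrange]; exact hx
      obtain ⟨y, rfl⟩ := this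
      have := ContinuousLinearMap.ext_iff.mp hidem y
      simpa using this.symm
    · intro hx
      rw [← hrange]
      exact ⟨x, hx.symm⟩
  rw [hrk]
  exact ContinuousLinearMap.isClosed_ker (ContinuousLinearMap.id ℂ H - R)
end

section
/- Let V be a finite-dimensional complex inner product space and A, B self-adjoint invertible operators on V such that c₁A + c₂B is invertible for all (c₁,c₂) ∈ ℝ² \ {0}. Let Q = A⁻¹B, and let V⁺ (resp. V⁻) be the sum of generalized eigenspaces of Q for eigenvalues with positive (resp. negative) imaginary part. Then dim V⁺ = dim V⁻ = (dim V)/2; in particular dim V is even. -/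
open Module Complex InnerProductSpace

theorem aux_ortho {V : Type*} [NormedAddCommGroup V] [InnerProductSpace ℂ V]
    (A : Module.End ℂ V) (Q : Module.End ℂ V)
    (hsym : ∀ x y : V, inner ℂ (A (Q x)) y = (inner ℂ (A x) (Q y) : ℂ))
    (l m : ℂ) (hlm : (starRingEnd ℂ) l ≠ m) :
    ∀ N j k (x y : V), j + k ≤ N → (((Q - l • 1) ^ j : Module.End ℂ V)) x = 0 →
      (((Q - m • 1) ^ k : Module.End ℂ V)) y = 0 → (inner ℂ (A x) y : ℂ) = 0 := by
  intro N
  induction N with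
  | zero =>
    intro j k x y hjk hx hy
    obtain rfl : j = 0 := by omega
    simp only [pow_zero, Module.End.one_apply] at hx
    simp [hx]
  | succ N ih =>
    intro j k x y hjk hx hy
    match j, k with
    | 0, k =>
      simp only [pow_zero, Module.End.one_apply] at hx
      simp [hx]
    | j+1, 0 =>
      simp only [pow_zero, Module.End.one_apply] at hy
      simp [hy]
    | j+1, k+1 =>
      have hx' : (((Q - l • 1) ^ j : Module.End ℂ V)) ((Q - l • 1) x) = 0 := by
        rw [← Module.End.mul_apply, ← pow_succ]; exact hx
      have hy' : (((Q - m • 1) ^ k : Module.End ℂ V)) ((Q - m • 1) y) = 0 := by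
        rw [← Module.End.mul_apply, ← pow_succ]; exact hy
      have h1 : (inner ℂ (A ((Q - l • 1) x)) y : ℂ) = 0 :=
        ih j (k+1) _ y (by omega) hx' hy
      have h2 : (inner ℂ (A x) ((Q - m • 1) y) : ℂ) = 0 :=
        ih (j+1) k x _ (by omega) hx hy'
      have e1 : (inner ℂ (A ((Q - l • 1) x)) y : ℂ)
          = inner ℂ (A (Q x)) y - (starRingEnd ℂ) l * inner ℂ (A x) y := by
        simp [LinearMap.sub_apply, LinearMap.smul_apply, map_sub, map_smul,
          inner_sub_left, inner_smul_left, mul_comm]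
      have e2 : (inner ℂ (A x) ((Q - m • 1) y) : ℂ)
          = inner ℂ (A x) (Q y) - m * inner ℂ (A x) y := by
        simp [LinearMap.sub_apply, LinearMap.smul_apply, inner_sub_right,
          inner_smul_right]
      have hh := hsym x y
      rw [e1, hh] at h1
      rw [e2] at h2
      have : (m - (starRingEnd ℂ) l) * (inner ℂ (A x) y : ℂ) = 0 := by
        linear_combination h1 - h2
      rcases mul_eq_zero.mp this with h | h
      · exact absurd (by linear_combination -h) hlm
      · exact h

/-- If every pair of vectors in `p` pairs to zero under `⟪A ·, ·⟫` with `A` a unit,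
then `2 * finrank p ≤ finrank V`. -/
theorem aux_dim {V : Type*} [NormedAddCommGroup V] [InnerProductSpace ℂ V]
    [FiniteDimensional ℂ V] (A Ainv : Module.End ℂ V)
    (hAinv : Ainv * A = 1 ∧ A * Ainv = 1)
    (p : Submodule ℂ V) (h : ∀ x ∈ p, ∀ y ∈ p, (inner ℂ (A x) y : ℂ) = 0) :
    2 * Module.finrank ℂ p ≤ Module.finrank ℂ V := by
  set e : V ≃ₗ[ℂ] V := LinearEquiv.ofLinear A Ainv hAinv.2 hAinv.1 with he
  have hmap : Module.finrank ℂ (p.map (e : V →ₗ[ℂ] V)) = Module.finrank ℂ p :=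
    LinearEquiv.finrank_map_eq e p
  have hle : p.map (e : V →ₗ[ℂ] V) ≤ pᗮ := by
    rintro v ⟨x, hx, rfl⟩
    intro u hu
    have := h x hx u hu
    have : (inner ℂ u (A x) : ℂ) = 0 := by
      rw [← inner_conj_symm]
      simp [this]
    simpa [he] using this
  have h1 : Module.finrank ℂ (p.map (e : V →ₗ[ℂ] V)) ≤ Module.finrank ℂ pᗮ :=
    Submodule.finrank_mono hle
  have h2 := Submodule.finrank_add_finrank_orthogonal p
  omega

/-- Let `V` be a finite-dimensional complex inner product space and
`A, B` self-adjoint invertible operators on `V` with `c₁ A + c₂ B` invertible for all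
real `(c₁, c₂) ≠ 0`. Let `Q = A⁻¹ B`, and let `V⁺` (resp. `V⁻`) be the sum of the
generalized eigenspaces `ker (Q - λ)^{dim V}` of `Q` over eigenvalues `λ` with
positive (resp. negative) imaginary part. Then `dim V⁺ = dim V⁻ = (dim V)/2`;
in particular `dim V` is even. -/
theorem stmt11 {V : Type*} [NormedAddCommGroup V] [InnerProductSpace ℂ V]
    [FiniteDimensional ℂ V]
    (A B Ainv : Module.End ℂ V)
    (hA : LinearMap.IsSymmetric A) (hB : LinearMap.IsSymmetric B)
    (hAinv : Ainv * A = 1 ∧ A * Ainv = 1) (hBunit : IsUnit B)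
    (hell : ∀ c : ℝ × ℝ, c ≠ 0 → IsUnit ((c.1 : ℂ) • A + (c.2 : ℂ) • B)) :
    2 * Module.finrank ℂ
        (⨆ μ : {μ : ℂ // 0 < μ.im},
          LinearMap.ker ((Ainv * B - μ.1 • 1) ^ Module.finrank ℂ V) : Submodule ℂ V)
      = Module.finrank ℂ V ∧
    2 * Module.finrank ℂ
        (⨆ μ : {μ : ℂ // μ.im < 0},
          LinearMap.ker ((Ainv * B - μ.1 • 1) ^ Module.finrank ℂ V) : Submodule ℂ V)
      = Module.finrank ℂ V ∧
    Even (Module.finrank ℂ V) := by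
  set n := Module.finrank ℂ V with hn
  set Q : Module.End ℂ V := Ainv * B with hQ
  set P : Submodule ℂ V :=
    (⨆ μ : {μ : ℂ // 0 < μ.im}, LinearMap.ker ((Q - μ.1 • 1) ^ n)) with hP
  set Nsp : Submodule ℂ V :=
    (⨆ μ : {μ : ℂ // μ.im < 0}, LinearMap.ker ((Q - μ.1 • 1) ^ n)) with hNsp
  have hAinvU : IsUnit Ainv := ⟨⟨Ainv, A, hAinv.1, hAinv.2⟩, rfl⟩
  -- symmetry of the pairing
  have hsym : ∀ x y : V, inner ℂ (A (Q x)) y = (inner ℂ (A x) (Q y) : ℂ) := by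
    intro x y
    have hAQ : ∀ z : V, A (Q z) = B z := by
      intro z
      have : A * Q = B := by rw [hQ, ← mul_assoc, hAinv.2, one_mul]
      calc A (Q z) = (A * Q) z := rfl
        _ = B z := by rw [this]
    rw [hAQ x, hB x y, ← hAQ y, hA x (Q y)]
  -- real values are excluded
  have hreal : ∀ μ : ℂ, μ.im = 0 → IsUnit (Q - μ • 1) := by
    intro μ hμ
    have h1 : IsUnit (((-μ.re : ℝ) : ℂ) • A + ((1 : ℝ) : ℂ) • B) := by
      refine hell (-μ.re, 1) ?_
      simp [Prod.ext_iff]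
    have hμeq : ((μ.re : ℝ) : ℂ) = μ := by
      apply Complex.ext <;> simp [hμ]
    have h2 : Q - μ • 1 = Ainv * (((-μ.re : ℝ) : ℂ) • A + ((1 : ℝ) : ℂ) • B) := by
      rw [mul_add, mul_smul_comm, mul_smul_comm, hAinv.1, hQ]
      push_cast [hμeq]
      module
    rw [h2]
    exact hAinvU.mul h1
  -- the two spaces fill the whole space
  have htop : P ⊔ Nsp = ⊤ := by
    refine le_antisymm le_top ?_
    rw [← Module.End.iSup_maxGenEigenspace_eq_top Q]
    apply iSup_le
    intro μ
    rw [Module.End.maxGenEigenspace_eq_genEigenspace_finrank,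
      Module.End.genEigenspace_nat]
    rcases lt_trichotomy μ.im 0 with h | h | h
    · exact le_trans (le_iSup (fun μ : {μ : ℂ // μ.im < 0} =>
        LinearMap.ker ((Q - μ.1 • 1) ^ n)) ⟨μ, h⟩) le_sup_right
    · have hu : IsUnit ((Q - μ • 1) ^ n) := (hreal μ h).pow n
      have : LinearMap.ker ((Q - μ • 1) ^ n) = ⊥ :=
        LinearMap.ker_eq_bot.mpr ((Module.End.isUnit_iff _).mp hu).injective
      rw [this]; exact bot_le
    · exact le_trans (le_iSup (fun μ : {μ : ℂ // 0 < μ.im} =>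
        LinearMap.ker ((Q - μ.1 • 1) ^ n)) ⟨μ, h⟩) le_sup_left
  -- orthogonality within P
  have horthP : ∀ x ∈ P, ∀ y ∈ P, (inner ℂ (A x) y : ℂ) = 0 := by
    intro x hx
    refine Submodule.iSup_induction _ (motive := fun x => ∀ y ∈ P, (inner ℂ (A x) y : ℂ) = 0)
      hx ?_ (by simp) ?_
    · rintro ⟨l, hl⟩ x hxl y hy
      refine Submodule.iSup_induction _ (motive := fun y => (inner ℂ (A x) y : ℂ) = 0)
        hy ?_ (by simp) ?_
      · rintro ⟨m, hm⟩ y hym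
        have hlm : (starRingEnd ℂ) l ≠ m := by
          intro hc
          rw [← hc] at hm
          simp only [Complex.conj_im] at hm
          linarith
        exact aux_ortho A Q hsym l m hlm (n + n) n n x y le_rfl hxl hym
      · intro a b ha hb; rw [inner_add_right, ha, hb, add_zero]
    · intro a b ha hb y hy
      rw [map_add, inner_add_left, ha y hy, hb y hy, add_zero]
  -- orthogonality within Nsp
  have horthN : ∀ x ∈ Nsp, ∀ y ∈ Nsp, (inner ℂ (A x) y : ℂ) = 0 := by
    intro x hx
    refine Submodule.iSup_induction _ (motive := fun x => ∀ y ∈ Nsp, (inner ℂ (A x) y : ℂ) = 0)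
      hx ?_ (by simp) ?_
    · rintro ⟨l, hl⟩ x hxl y hy
      refine Submodule.iSup_induction _ (motive := fun y => (inner ℂ (A x) y : ℂ) = 0)
        hy ?_ (by simp) ?_
      · rintro ⟨m, hm⟩ y hym
        have hlm : (starRingEnd ℂ) l ≠ m := by
          intro hc
          rw [← hc] at hm
          simp only [Complex.conj_im] at hm
          linarith
        exact aux_ortho A Q hsym l m hlm (n + n) n n x y le_rfl hxl hym
      · intro a b ha hb; rw [inner_add_right, ha, hb, add_zero]
    · intro a b ha hb y hy
      rw [map_add, inner_add_left, ha y hy, hb y hy, add_zero]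
  have hdP : 2 * Module.finrank ℂ P ≤ n := aux_dim A Ainv hAinv P horthP
  have hdN : 2 * Module.finrank ℂ Nsp ≤ n := aux_dim A Ainv hAinv Nsp horthN
  have hsum : n ≤ Module.finrank ℂ P + Module.finrank ℂ Nsp := by
    have h1 := Submodule.finrank_sup_add_finrank_inf_eq P Nsp
    have h2 : Module.finrank ℂ ↥(P ⊔ Nsp) = n := by rw [htop]; exact finrank_top ℂ V
    omega
  refine ⟨by omega, by omega, ⟨Module.finrank ℂ P, by omega⟩⟩
end

section
/- Let V be a finite-dimensional complex inner product space, A, B self-adjoint operators on V with A invertible, and Q = A⁻¹B. Let V_λ denote the generalized eigenspace of Q for eigenvalue λ ∈ ℂ. If λ ≠ conj(μ), then A(V_λ) is orthogonal to V_μ, i.e., ⟨A u, v⟩ = 0 for all u ∈ V_λ, v ∈ V_μ. -/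
/-- Let `V` be a finite-dimensional complex inner product space,
`A, B` self-adjoint operators on `V` with `A` invertible, and `Q = A⁻¹ B`. Let
`V_λ = ker (Q - λ)^{dim V}` be the generalized eigenspace of `Q` for `λ ∈ ℂ`.
If `λ ≠ conj μ`, then `A(V_λ)` is orthogonal to `V_μ`: `⟨A u, v⟩ = 0` for all
`u ∈ V_λ`, `v ∈ V_μ`. -/
theorem stmt12 {V : Type*} [NormedAddCommGroup V] [InnerProductSpace ℂ V]
    [FiniteDimensional ℂ V]
    (A B Ainv : Module.End ℂ V)
    (hA : LinearMap.IsSymmetric A) (hB : LinearMap.IsSymmetric B)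
    (hAinv : Ainv * A = 1 ∧ A * Ainv = 1)
    (lam mu : ℂ) (h : lam ≠ star mu)
    (u v : V)
    (hu : u ∈ LinearMap.ker ((Ainv * B - lam • 1) ^ Module.finrank ℂ V))
    (hv : v ∈ LinearMap.ker ((Ainv * B - mu • 1) ^ Module.finrank ℂ V)) :
    (inner ℂ (A u) v : ℂ) = 0 := by
  set Q := Ainv * B with hQdef
  have hAAinv : ∀ w : V, A (Ainv w) = w := fun w => by
    have := congrArg (fun f : Module.End ℂ V => f w) hAinv.2
    simpa [Module.End.mul_apply] using this
  have key : ∀ x y : V, (inner ℂ (A (Q x)) y : ℂ) = inner ℂ (A x) (Q y) := by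
    intro x y
    calc (inner ℂ (A (Q x)) y : ℂ) = inner ℂ (B x) y := by
          rw [show Q x = Ainv (B x) from rfl, hAAinv]
      _ = inner ℂ x (B y) := hB x y
      _ = inner ℂ x (A (Ainv (B y))) := by rw [hAAinv]
      _ = inner ℂ (A x) (Ainv (B y)) := (hA x _).symm
      _ = inner ℂ (A x) (Q y) := rfl
  have aux : ∀ k m n : ℕ, m + n ≤ k → ∀ x y : V,
      ((Q - lam • 1) ^ m) x = 0 → ((Q - mu • 1) ^ n) y = 0 →
      (inner ℂ (A x) y : ℂ) = 0 := by
    intro k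
    induction k with
    | zero =>
      intro m n hmn x y hx hy
      have hm : m = 0 := by omega
      subst hm
      simp only [pow_zero, Module.End.one_apply] at hx
      simp [hx]
    | succ k ih =>
      intro m n hmn x y hx hy
      match m, n with
      | 0, _ =>
        simp only [pow_zero, Module.End.one_apply] at hx
        simp [hx]
      | _+1, 0 =>
        simp only [pow_zero, Module.End.one_apply] at hy
        simp [hy]
      | m+1, n+1 =>
        have hx' : ((Q - lam • 1) ^ m) ((Q - lam • 1) x) = 0 := by
          rw [← Module.End.mul_apply, ← pow_succ]; exact hx
        have hy' : ((Q - mu • 1) ^ n) ((Q - mu • 1) y) = 0 := by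
          rw [← Module.End.mul_apply, ← pow_succ]; exact hy
        have e1 : (inner ℂ (A ((Q - lam • 1) x)) y : ℂ) = 0 :=
          ih m (n+1) (by omega) _ _ hx' hy
        have e2 : (inner ℂ (A x) ((Q - mu • 1) y) : ℂ) = 0 :=
          ih (m+1) n (by omega) _ _ hx hy'
        simp only [LinearMap.sub_apply, LinearMap.smul_apply, Module.End.one_apply,
          map_sub, map_smul, inner_sub_left, inner_smul_left] at e1
        simp only [LinearMap.sub_apply, LinearMap.smul_apply, Module.End.one_apply,
          inner_sub_right, inner_smul_right] at e2
        have hkey := key x y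
        have hne : mu - (starRingEnd ℂ) lam ≠ 0 := by
          intro hc
          apply h
          have hm : mu = (starRingEnd ℂ) lam := sub_eq_zero.mp hc
          rw [hm]
          simp
        have hmain : (mu - (starRingEnd ℂ) lam) * (inner ℂ (A x) y : ℂ) = 0 := by
          linear_combination e1 - e2 - hkey
        rcases mul_eq_zero.mp hmain with h' | h'
        · exact absurd h' hne
        · exact h'
  exact aux (2 * Module.finrank ℂ V) _ _ (by omega) u v
    (LinearMap.mem_ker.mp hu) (LinearMap.mem_ker.mp hv)
end

section
/- Let V be a finite-dimensional complex inner product space with A, B self-adjoint invertible operators such that c₁A + c₂B is invertible for all real (c₁,c₂) ≠ 0, and let V⁺, V⁻ be the generalized eigenspace sums of Q = A⁻¹B for eigenvalues of positive/negative imaginary parts. Then A maps V⁺ to the orthogonal complement of V⁺ and V⁻ to the orthogonal complement of V⁻. -/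
open scoped InnerProductSpace

private lemma key13 {V : Type*} [NormedAddCommGroup V] [InnerProductSpace ℂ V]
    (A Q : Module.End ℂ V)
    (hQ : ∀ u v : V, ⟪A (Q u), v⟫_ℂ = ⟪A u, Q v⟫_ℂ)
    (lam mu : ℂ) (h : (starRingEnd ℂ) lam ≠ mu) :
    ∀ n m : ℕ, ∀ u v : V, ((Q - lam • 1) ^ n) u = 0 → ((Q - mu • 1) ^ m) v = 0 →
      ⟪A u, v⟫_ℂ = 0 := by
  intro n
  induction n with
  | zero =>
    intro m u v hu _
    have : u = 0 := by simpa using hu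
    simp [this]
  | succ n ih =>
    intro m
    induction m with
    | zero =>
      intro u v _ hv
      have : v = 0 := by simpa using hv
      simp [this]
    | succ m ihm =>
      intro u v hu hv
      have h1 : ((Q - lam • 1) ^ n) ((Q - lam • 1) u) = 0 := by
        rw [pow_succ] at hu; exact hu
      have h2 : ((Q - mu • 1) ^ m) ((Q - mu • 1) v) = 0 := by
        rw [pow_succ] at hv; exact hv
      have e1 : ⟪A ((Q - lam • 1) u), v⟫_ℂ = 0 := ih (m+1) _ _ h1 hv
      have e2 : ⟪A u, (Q - mu • 1) v⟫_ℂ = 0 := ihm u _ hu h2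
      have exp1 : ⟪A ((Q - lam • 1) u), v⟫_ℂ
          = ⟪A u, Q v⟫_ℂ - (starRingEnd ℂ) lam * ⟪A u, v⟫_ℂ := by
        have : (Q - lam • 1) u = Q u - lam • u := by
          simp [LinearMap.sub_apply, LinearMap.smul_apply]
        rw [this, map_sub, map_smul, inner_sub_left, inner_smul_left, hQ]
      have exp2 : ⟪A u, (Q - mu • 1) v⟫_ℂ = ⟪A u, Q v⟫_ℂ - mu * ⟪A u, v⟫_ℂ := by
        have : (Q - mu • 1) v = Q v - mu • v := by
          simp [LinearMap.sub_apply, LinearMap.smul_apply]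
        rw [this, inner_sub_right, inner_smul_right]
      have : ((starRingEnd ℂ) lam - mu) * ⟪A u, v⟫_ℂ = 0 := by
        rw [exp1] at e1; rw [exp2] at e2
        linear_combination e2 - e1
      rcases mul_eq_zero.mp this with h' | h'
      · exact absurd (sub_eq_zero.mp h') h
      · exact h'

/-- Let `V` be a finite-dimensional complex inner product space,
`A, B` self-adjoint invertible operators with `c₁ A + c₂ B` invertible for all real
`(c₁, c₂) ≠ 0`, and let `V⁺, V⁻` be the sums of generalized eigenspaces of
`Q = A⁻¹ B` over eigenvalues of positive/negative imaginary part. Then `A` maps `V⁺`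
into the orthogonal complement of `V⁺`, and `V⁻` into the orthogonal complement of
`V⁻`. -/
theorem stmt13 {V : Type*} [NormedAddCommGroup V] [InnerProductSpace ℂ V]
    [FiniteDimensional ℂ V]
    (A B Ainv : Module.End ℂ V)
    (hA : LinearMap.IsSymmetric A) (hB : LinearMap.IsSymmetric B)
    (hAinv : Ainv * A = 1 ∧ A * Ainv = 1) (hBunit : IsUnit B)
    (hell : ∀ c : ℝ × ℝ, c ≠ 0 → IsUnit ((c.1 : ℂ) • A + (c.2 : ℂ) • B)) :
    Submodule.map A
        (⨆ μ : {μ : ℂ // 0 < μ.im},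
          LinearMap.ker ((Ainv * B - μ.1 • 1) ^ Module.finrank ℂ V)) ≤
      (⨆ μ : {μ : ℂ // 0 < μ.im},
          LinearMap.ker ((Ainv * B - μ.1 • 1) ^ Module.finrank ℂ V))ᗮ ∧
    Submodule.map A
        (⨆ μ : {μ : ℂ // μ.im < 0},
          LinearMap.ker ((Ainv * B - μ.1 • 1) ^ Module.finrank ℂ V)) ≤
      (⨆ μ : {μ : ℂ // μ.im < 0},
          LinearMap.ker ((Ainv * B - μ.1 • 1) ^ Module.finrank ℂ V))ᗮ := by
  set Q := Ainv * B with hQdef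
  have hAQ : A * Q = B := by rw [hQdef, ← mul_assoc, hAinv.2, one_mul]
  have hQ : ∀ u v : V, ⟪A (Q u), v⟫_ℂ = ⟪A u, Q v⟫_ℂ := by
    intro u v
    have h1 : A (Q u) = B u := by
      rw [← Module.End.mul_apply, hAQ]
    have h2 : A (Q v) = B v := by
      rw [← Module.End.mul_apply, hAQ]
    rw [h1, hB u v, ← h2, ← hA u (Q v)]
  -- general lemma for a predicate on imaginary parts
  have main : ∀ (P : ℂ → Prop), (∀ lam mu, P lam → P mu → (starRingEnd ℂ) lam ≠ mu) →
      Submodule.map A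
        (⨆ μ : {μ : ℂ // P μ}, LinearMap.ker ((Q - μ.1 • 1) ^ Module.finrank ℂ V)) ≤
      (⨆ μ : {μ : ℂ // P μ}, LinearMap.ker ((Q - μ.1 • 1) ^ Module.finrank ℂ V))ᗮ := by
    intro P hP x hx
    obtain ⟨u, hu, rfl⟩ := hx
    rw [Submodule.mem_orthogonal]
    intro v hv
    have goal : ⟪A u, v⟫_ℂ = 0 := by
      refine Submodule.iSup_induction (motive := fun u => ⟪A u, v⟫_ℂ = 0) _ hu ?_ (by simp) ?_
      · intro i u hui
        refine Submodule.iSup_induction (motive := fun v => ⟪A u, v⟫_ℂ = 0) _ hv ?_ (by simp) ?_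
        · intro j w hwj
          exact key13 A Q hQ i.1 j.1 (hP i.1 j.1 i.2 j.2) _ _ u w hui hwj
        · intro x y hx hy
          rw [inner_add_right, hx, hy, add_zero]
      · intro x y hx hy
        rw [map_add, inner_add_left, hx, hy, add_zero]
    rw [← inner_conj_symm, goal, map_zero]
  constructor
  · exact main (fun μ => 0 < μ.im) (by
      intro lam mu hl hm h
      have : ((starRingEnd ℂ) lam).im = mu.im := by rw [h]
      simp only [Complex.conj_im] at this
      linarith)
  · exact main (fun μ => μ.im < 0) (by
      intro lam mu hl hm h
      have : ((starRingEnd ℂ) lam).im = mu.im := by rw [h]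
      simp only [Complex.conj_im] at this
      linarith)
end

section
/- Let E be a finite-dimensional complex inner product space decomposed as a direct sum (not necessarily orthogonal) of subspaces E⁺ and E⁻ of equal dimension, and let σ be a self-adjoint invertible operator on E mapping E⁺ onto (E⁺)^⊥ and E⁻ onto (E⁻)^⊥. Define a symplectic-type form ω(u,v) = ⟨iσu, v⟩. Let P⁺ be the projection onto E⁺ along E⁻ and P⁻ = 1 − P⁺. For a self-adjoint automorphism T of E⁻, set P_T = P⁺(1 + iσ⁻¹ T' P⁻) where T' is T followed by the inverse of the orthogonal projection identification; then L = ker P_T satisfies: L is Lagrangian for ω (i.e., iσ(L) = L^⊥) if and only if T is self-adjoint. -/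
/-- Let `E` be a finite-dimensional complex inner product space
decomposed as a (not necessarily orthogonal) direct sum `E = E⁺ ⊕ E⁻` of subspaces of
equal dimension, and `σ` a self-adjoint invertible operator on `E` mapping `E⁺` onto
`(E⁺)^⊥` and `E⁻` onto `(E⁻)^⊥`. Let `P⁺` be the projection onto `E⁺` along `E⁻` and
`P⁻ = 1 - P⁺`. For an automorphism `T` of `E⁻`, set
`P_T = P⁺ + i σ⁻¹ (P⁻)* T P⁻` and `L = ker P_T`. Then `L` is Lagrangian
(`σ(L) = L^⊥`) if and only if `T` is self-adjoint. -/
theorem stmt14 {E : Type*} [NormedAddCommGroup E] [InnerProductSpace ℂ E]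
    [FiniteDimensional ℂ E]
    (Ep Em : Submodule ℂ E) (hcompl : IsCompl Ep Em)
    (hrank : Module.finrank ℂ Ep = Module.finrank ℂ Em)
    (σ σinv : E →ₗ[ℂ] E) (hσ : σ.IsSymmetric) (hσbij : Function.Bijective σ)
    (hσinv : σinv ∘ₗ σ = LinearMap.id ∧ σ ∘ₗ σinv = LinearMap.id)
    (hσp : Submodule.map σ Ep = Epᗮ) (hσm : Submodule.map σ Em = Emᗮ)
    (Pp : E →ₗ[ℂ] E) (hPpidem : Pp ∘ₗ Pp = Pp)
    (hPpr : LinearMap.range Pp = Ep) (hPpk : LinearMap.ker Pp = Em)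
    (hmem : ∀ x : E, (((LinearMap.id : E →ₗ[ℂ] E) - Pp)) x ∈ Em)
    (T : Em →ₗ[ℂ] Em) (hT : Function.Bijective T) :
    Submodule.map σ
        (LinearMap.ker (Pp + Complex.I •
          (σinv ∘ₗ LinearMap.adjoint (((LinearMap.id : E →ₗ[ℂ] E) - Pp)) ∘ₗ Em.subtype ∘ₗ T ∘ₗ
            LinearMap.codRestrict Em (((LinearMap.id : E →ₗ[ℂ] E) - Pp)) hmem))) =
      (LinearMap.ker (Pp + Complex.I •
          (σinv ∘ₗ LinearMap.adjoint (((LinearMap.id : E →ₗ[ℂ] E) - Pp)) ∘ₗ Em.subtype ∘ₗ T ∘ₗ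
            LinearMap.codRestrict Em (((LinearMap.id : E →ₗ[ℂ] E) - Pp)) hmem)))ᗮ
    ↔ T.IsSymmetric := by
  set Pm : E →ₗ[ℂ] E := (LinearMap.id : E →ₗ[ℂ] E) - Pp with hPmdef
  set B : E →ₗ[ℂ] E :=
    σinv ∘ₗ LinearMap.adjoint Pm ∘ₗ Em.subtype ∘ₗ T ∘ₗ
      LinearMap.codRestrict Em Pm hmem with hBdef
  set PT : E →ₗ[ℂ] E := Pp + Complex.I • B with hPTdef
  set L : Submodule ℂ E := LinearMap.ker PT with hLdef
  -- basic facts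
  have hPp0 : ∀ m ∈ Em, Pp m = 0 := by
    intro m hm
    exact LinearMap.mem_ker.mp (hPpk.symm ▸ hm)
  have hPpfix : ∀ p ∈ Ep, Pp p = p := by
    intro p hp
    obtain ⟨y, rfl⟩ := hPpr.symm ▸ hp
    calc Pp (Pp y) = (Pp ∘ₗ Pp) y := rfl
      _ = Pp y := by rw [hPpidem]
  have hPmapp : ∀ x : E, Pm x = x - Pp x := fun x => rfl
  have hPmm : ∀ m ∈ Em, Pm m = m := by
    intro m hm; rw [hPmapp, hPp0 m hm, sub_zero]
  have hAdjEp : ∀ u : E, LinearMap.adjoint Pm u ∈ Epᗮ := by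
    intro u
    rw [Submodule.mem_orthogonal]
    intro p hp
    rw [LinearMap.adjoint_inner_right]
    have : Pm p = 0 := by rw [hPmapp, hPpfix p hp, sub_self]
    rw [this, inner_zero_left]
  have hBEp : ∀ x : E, B x ∈ Ep := by
    intro x
    have h1 : LinearMap.adjoint Pm ((Em.subtype ∘ₗ T ∘ₗ
        LinearMap.codRestrict Em Pm hmem) x) ∈ Epᗮ := hAdjEp _
    rw [← hσp] at h1
    obtain ⟨p, hp, hpe⟩ := h1
    have : B x = σinv (σ p) := by rw [hpe]; rfl
    rw [this]
    have : σinv (σ p) = p := by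
      have := congrArg (fun f => f p) hσinv.1; simpa using this
    rw [this]; exact hp
  have hσinvσ : ∀ x, σinv (σ x) = x := by
    intro x; have := congrArg (fun f => f x) hσinv.1; simpa using this
  have hσσinv : ∀ x, σ (σinv x) = x := by
    intro x; have := congrArg (fun f => f x) hσinv.2; simpa using this
  have hBval : ∀ x : E, B x = σinv (LinearMap.adjoint Pm
      (Em.subtype (T (LinearMap.codRestrict Em Pm hmem x)))) := fun x => rfl
  have hσB : ∀ x : E, σ (B x) = LinearMap.adjoint Pm
      (Em.subtype (T (LinearMap.codRestrict Em Pm hmem x))) := by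
    intro x; rw [hBval, hσσinv]
  have hcod : ∀ m : Em, LinearMap.codRestrict Em Pm hmem (m : E) = m := by
    intro m; apply Subtype.ext; exact hPmm m m.2
  -- the graph map
  set φ : Em →ₗ[ℂ] E := Em.subtype - Complex.I • (B ∘ₗ Em.subtype) with hφdef
  have hφapp : ∀ m : Em, φ m = (m : E) - Complex.I • B (m : E) := fun m => rfl
  have hPpφ : ∀ m : Em, Pp (φ m) = -(Complex.I • B (m : E)) := by
    intro m
    rw [hφapp, map_sub, map_smul, hPp0 _ m.2, hPpfix _ (hBEp _), zero_sub]
  have hPmφ : ∀ m : Em, Pm (φ m) = (m : E) := by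
    intro m
    rw [hPmapp, hPpφ, hφapp, sub_neg_eq_add, sub_add_cancel]
  have hBφ : ∀ m : Em, B (φ m) = B (m : E) := by
    intro m
    have hc : LinearMap.codRestrict Em Pm hmem (φ m)
        = LinearMap.codRestrict Em Pm hmem (m : E) := by
      apply Subtype.ext
      show Pm (φ m) = Pm (m : E)
      rw [hPmφ, hPmm _ m.2]
    rw [hBval (φ m), hBval (m : E), hc]
  have hφL : ∀ m : Em, φ m ∈ L := by
    intro m
    show PT (φ m) = 0
    show Pp (φ m) + (Complex.I • B) (φ m) = 0
    rw [hPpφ]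
    show -(Complex.I • B (m : E)) + Complex.I • B (φ m) = 0
    rw [hBφ, neg_add_cancel]
  have hLφ : ∀ x ∈ L, x = φ (LinearMap.codRestrict Em Pm hmem x) := by
    intro x hx
    have hx0 : Pp x + Complex.I • B x = 0 := hx
    have hBPm : B (Pm x) = B x := by
      have hc : LinearMap.codRestrict Em Pm hmem (Pm x)
          = LinearMap.codRestrict Em Pm hmem x := by
        apply Subtype.ext
        show Pm (Pm x) = Pm x
        exact hPmm _ (hmem x)
      rw [hBval (Pm x), hBval x, hc]
    rw [hφapp]
    show x = Pm x - Complex.I • B (Pm x)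
    rw [hBPm, hPmapp]
    have hPpx : Pp x = -(Complex.I • B x) := eq_neg_of_add_eq_zero_left hx0
    rw [hPpx]
    abel
  have hLrange : L = LinearMap.range φ := by
    apply le_antisymm
    · intro x hx
      exact ⟨LinearMap.codRestrict Em Pm hmem x, (hLφ x hx).symm⟩
    · rintro x ⟨m, rfl⟩
      exact hφL m
  have hφinj : Function.Injective φ := by
    intro a b hab
    have := congrArg Pm hab
    rw [hPmφ, hPmφ] at this
    exact Subtype.ext this
  have hfrL : Module.finrank ℂ L = Module.finrank ℂ Em := by
    rw [hLrange]
    exact LinearMap.finrank_range_of_inj hφinj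
  -- key inner product identity
  have hkey : ∀ m m' : Em, (inner ℂ (σ (φ m)) (φ m') : ℂ)
      = Complex.I * ((inner ℂ ((T m : E)) ((m' : E)) : ℂ) - inner ℂ ((m : E)) ((T m' : E))) := by
    intro m m'
    have hσφ : σ (φ m) = σ (m : E) - Complex.I • LinearMap.adjoint Pm ((T m : E)) := by
      rw [hφapp, map_sub, map_smul, hσB, hcod]
      rfl
    rw [hσφ, hφapp m']
    rw [inner_sub_left, inner_sub_right, inner_sub_right, inner_smul_left,
      inner_smul_right, inner_smul_left, inner_smul_right]
    have t1 : (inner ℂ (σ (m : E)) ((m' : E)) : ℂ) = 0 := by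
      have hσmEm : σ (m : E) ∈ Emᗮ := hσm ▸ Submodule.mem_map_of_mem m.2
      have := (Submodule.mem_orthogonal Em (σ (m : E))).mp hσmEm (m' : E) m'.2
      rw [← inner_conj_symm, this, map_zero]
    have t2 : (inner ℂ (σ (m : E)) (B (m' : E)) : ℂ) = inner ℂ ((m : E)) ((T m' : E)) := by
      rw [hσ, hBval, hσσinv, LinearMap.adjoint_inner_right, hcod]
      congr 1
      exact hPmm _ m.2
    have t3 : (inner ℂ (LinearMap.adjoint Pm ((T m : E))) ((m' : E)) : ℂ)
        = inner ℂ ((T m : E)) ((m' : E)) := by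
      rw [LinearMap.adjoint_inner_left]
      congr 1
      exact hPmm _ m'.2
    have t4 : (inner ℂ (LinearMap.adjoint Pm ((T m : E))) (B (m' : E)) : ℂ) = 0 := by
      rw [LinearMap.adjoint_inner_left]
      have : Pm (B (m' : E)) = 0 := by
        rw [hPmapp, hPpfix _ (hBEp _), sub_self]
      rw [this, inner_zero_right]
    rw [t1, t2, t3, t4]
    simp [Complex.conj_I]
    ring
  have hsymm_iff : ∀ m m' : Em, (inner ℂ (T m) m' : ℂ) = inner ℂ m (T m')
      ↔ (inner ℂ (σ (φ m)) (φ m') : ℂ) = 0 := by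
    intro m m'
    rw [hkey m m', Submodule.coe_inner, Submodule.coe_inner]
    constructor
    · intro h; rw [h, sub_self, mul_zero]
    · intro h
      have := mul_eq_zero.mp h
      rcases this with h' | h'
      · exact absurd h' Complex.I_ne_zero
      · exact sub_eq_zero.mp h'
  constructor
  · intro hL'
    intro m m'
    rw [hsymm_iff m m']
    have h1 : σ (φ m) ∈ Lᗮ := hL' ▸ Submodule.mem_map_of_mem (hφL m)
    have h2 := (Submodule.mem_orthogonal L (σ (φ m))).mp h1 (φ m') (hφL m')
    rw [← inner_conj_symm, h2, map_zero]
  · intro hTsym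
    apply Submodule.eq_of_le_of_finrank_eq
    · rintro v ⟨x, hx, rfl⟩
      rw [Submodule.mem_orthogonal]
      intro u hu
      have hx' := hLφ x hx
      have hu' := hLφ u hu
      rw [hx', hu']
      have h0 : (inner ℂ (σ (φ (LinearMap.codRestrict Em Pm hmem x)))
          (φ (LinearMap.codRestrict Em Pm hmem u)) : ℂ) = 0 :=
        (hsymm_iff _ _).mp (hTsym _ _)
      rw [← inner_conj_symm, h0, map_zero]
    · have h1 : Module.finrank ℂ (Submodule.map σ L) = Module.finrank ℂ L := by
        have : Submodule.map σ L
            = Submodule.map (LinearEquiv.ofBijective σ hσbij : E →ₗ[ℂ] E) L := rfl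
        rw [this]
        exact LinearEquiv.finrank_map_eq (LinearEquiv.ofBijective σ hσbij) L
      have h2 := Submodule.finrank_add_finrank_orthogonal L
      have h3 := Submodule.finrank_add_eq_of_isCompl hcompl
      rw [h1, hfrL]
      omega
end

section
/- Let E be a finite-dimensional complex inner product space with decomposition E = E⁺ ⊕ E⁻ (equal dimensions), P⁺ the projection onto E⁺ along E⁻, and T an invertible linear automorphism of E⁻. Let σ be self-adjoint invertible with σ(E±) = (E±)^⊥. Define P_T = P⁺ + iσ⁻¹(P⁻)*T P⁻ where P⁻ = 1 − P⁺. Then P_T is an idempotent with image E⁺, its kernel L = ker P_T satisfies L ∩ E⁺ = 0, L + E⁺ = E, L ∩ E⁻ = 0, and dim L = dim E⁻. -/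
/-- Let `E` be a finite-dimensional complex inner product space with
`E = E⁺ ⊕ E⁻` (equal dimensions), `P⁺` the projection onto `E⁺` along `E⁻`,
`P⁻ = 1 - P⁺`, `σ` self-adjoint invertible with `σ(E±) = (E±)^⊥`, and `T` an
invertible automorphism of `E⁻`. Define `P_T = P⁺ + i σ⁻¹ (P⁻)* T P⁻`. Then `P_T` is
an idempotent with image `E⁺`, and its kernel `L = ker P_T` satisfies `L ∩ E⁺ = 0`,
`L + E⁺ = E`, `L ∩ E⁻ = 0`, and `dim L = dim E⁻`. -/
theorem stmt16 {E : Type*} [NormedAddCommGroup E] [InnerProductSpace ℂ E]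
    [FiniteDimensional ℂ E]
    (Ep Em : Submodule ℂ E) (hcompl : IsCompl Ep Em)
    (hrank : Module.finrank ℂ Ep = Module.finrank ℂ Em)
    (σ σinv : E →ₗ[ℂ] E) (hσ : σ.IsSymmetric) (hσbij : Function.Bijective σ)
    (hσinv : σinv ∘ₗ σ = LinearMap.id ∧ σ ∘ₗ σinv = LinearMap.id)
    (hσp : Submodule.map σ Ep = Epᗮ) (hσm : Submodule.map σ Em = Emᗮ)
    (Pp : E →ₗ[ℂ] E) (hPpidem : Pp ∘ₗ Pp = Pp)
    (hPpr : LinearMap.range Pp = Ep) (hPpk : LinearMap.ker Pp = Em)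
    (hmem : ∀ x : E, ((LinearMap.id : E →ₗ[ℂ] E) - Pp) x ∈ Em)
    (T : Em →ₗ[ℂ] Em) (hT : Function.Bijective T)
    (PT : E →ₗ[ℂ] E)
    (hPT : PT = Pp + Complex.I •
      (σinv ∘ₗ LinearMap.adjoint ((LinearMap.id : E →ₗ[ℂ] E) - Pp) ∘ₗ Em.subtype ∘ₗ T ∘ₗ
        LinearMap.codRestrict Em ((LinearMap.id : E →ₗ[ℂ] E) - Pp) hmem)) :
    PT ∘ₗ PT = PT ∧
    LinearMap.range PT = Ep ∧
    LinearMap.ker PT ⊓ Ep = ⊥ ∧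
    LinearMap.ker PT ⊔ Ep = ⊤ ∧
    LinearMap.ker PT ⊓ Em = ⊥ ∧
    Module.finrank ℂ (LinearMap.ker PT) = Module.finrank ℂ Em := by
  obtain ⟨hσinv1, hσinv2⟩ := hσinv
  have hPpEp : ∀ x ∈ Ep, Pp x = x := by
    intro x hx
    rw [← hPpr] at hx
    obtain ⟨y, rfl⟩ := hx
    exact congrFun (congrArg DFunLike.coe hPpidem) y
  set R : E →ₗ[ℂ] E := (LinearMap.id : E →ₗ[ℂ] E) - Pp with hRdef
  set Q : E →ₗ[ℂ] E := σinv ∘ₗ LinearMap.adjoint R ∘ₗ Em.subtype ∘ₗ T ∘ₗ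
    LinearMap.codRestrict Em R hmem with hQdef
  have hPT' : PT = Pp + Complex.I • Q := hPT
  have hREp : ∀ x ∈ Ep, R x = 0 := by
    intro x hx
    simp [hRdef, LinearMap.sub_apply, hPpEp x hx]
  have hREm : ∀ x ∈ Em, R x = x := by
    intro x hx
    rw [← hPpk] at hx
    simp [hRdef, LinearMap.sub_apply, LinearMap.mem_ker.mp hx]
  have hσinvEp : ∀ v ∈ Epᗮ, σinv v ∈ Ep := by
    intro v hv
    rw [← hσp] at hv
    obtain ⟨w, hw, rfl⟩ := hv
    have : σinv (σ w) = w := congrFun (congrArg DFunLike.coe hσinv1) w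
    rw [this]; exact hw
  have hadjperp : ∀ z : E, LinearMap.adjoint R z ∈ Epᗮ := by
    intro z
    rw [Submodule.mem_orthogonal]
    intro y hy
    rw [LinearMap.adjoint_inner_right, hREp y hy, inner_zero_left]
  have hQEp : ∀ x, Q x ∈ Ep := by
    intro x
    exact hσinvEp _ (hadjperp _)
  have hQEp0 : ∀ x ∈ Ep, Q x = 0 := by
    intro x hx
    have h0 : LinearMap.codRestrict Em R hmem x = 0 := by
      ext
      simpa using hREp x hx
    simp [hQdef, LinearMap.comp_apply, h0]
  have hPTfix : ∀ x ∈ Ep, PT x = x := by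
    intro x hx
    rw [hPT']
    simp [LinearMap.add_apply, hPpEp x hx, hQEp0 x hx]
  have hPTmem : ∀ x, PT x ∈ Ep := by
    intro x
    rw [hPT']
    refine Ep.add_mem ?_ (Ep.smul_mem _ (hQEp x))
    rw [← hPpr]; exact ⟨x, rfl⟩
  have hidem : PT ∘ₗ PT = PT := by
    ext x
    exact hPTfix _ (hPTmem x)
  have hrange : LinearMap.range PT = Ep := by
    apply le_antisymm
    · rintro _ ⟨y, rfl⟩; exact hPTmem y
    · intro x hx; exact ⟨x, hPTfix x hx⟩
  have hdisj : LinearMap.ker PT ⊓ Ep = ⊥ := by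
    rw [Submodule.eq_bot_iff]
    rintro x ⟨hk, hx⟩
    have := hPTfix x hx
    rw [LinearMap.mem_ker.mp hk] at this
    exact this.symm
  have hsup : LinearMap.ker PT ⊔ Ep = ⊤ := by
    rw [Submodule.eq_top_iff']
    intro x
    have h1 : x - PT x ∈ LinearMap.ker PT := by
      rw [LinearMap.mem_ker, map_sub, hPTfix _ (hPTmem x), sub_self]
    have : x = (x - PT x) + PT x := by abel
    rw [this]
    exact Submodule.add_mem_sup h1 (hPTmem x)
  refine ⟨hidem, hrange, hdisj, hsup, ?_, ?_⟩
  · rw [Submodule.eq_bot_iff]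
    rintro x ⟨hk, hx⟩
    have hPp0 : Pp x = 0 := by
      rw [← hPpk] at hx; exact LinearMap.mem_ker.mp hx
    have hQx : Q x = 0 := by
      have := LinearMap.mem_ker.mp hk
      rw [hPT'] at this
      simp only [LinearMap.add_apply, LinearMap.smul_apply, hPp0, zero_add] at this
      have hI : (Complex.I : ℂ) ≠ 0 := Complex.I_ne_zero
      exact (smul_eq_zero.mp this).resolve_left hI
    -- from Q x = 0 deduce adjoint R (T ⟨x⟩) = 0
    have hadj0 : LinearMap.adjoint R ((T ⟨x, hx⟩ : Em) : E) = 0 := by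
      have hcod : LinearMap.codRestrict Em R hmem x = ⟨x, hx⟩ := by
        ext; simpa using hREm x hx
      have hQx' : σinv (LinearMap.adjoint R ((T ⟨x, hx⟩ : Em) : E)) = 0 := by
        rw [hQdef] at hQx
        simpa [LinearMap.comp_apply, hcod] using hQx
      have hinj : Function.Injective σinv := by
        intro a b hab
        have ha : σ (σinv a) = σ (σinv b) := by rw [hab]
        have h1 := congrFun (congrArg DFunLike.coe hσinv2) a
        have h2 := congrFun (congrArg DFunLike.coe hσinv2) b
        rw [LinearMap.comp_apply] at h1 h2
        rw [h1, h2] at ha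
        exact ha
      exact hinj (by rw [hQx', map_zero])
    set z : E := ((T ⟨x, hx⟩ : Em) : E) with hz
    have hzEm : z ∈ Em := (T ⟨x, hx⟩).2
    have hz0 : z = 0 := by
      have : (inner ℂ z (R z) : ℂ) = 0 := by
        rw [← LinearMap.adjoint_inner_left, hadj0, inner_zero_left]
      rw [hREm z hzEm] at this
      exact inner_self_eq_zero.mp this
    have hT0 : T ⟨x, hx⟩ = 0 := by
      exact Subtype.ext hz0
    have : (⟨x, hx⟩ : Em) = 0 := hT.1 (by rw [hT0, map_zero])
    simpa using congrArg Subtype.val this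
  · have h1 := Submodule.finrank_add_eq_of_isCompl hcompl
    have h2 := Submodule.finrank_add_eq_of_isCompl
      (⟨disjoint_iff.mpr hdisj, codisjoint_iff.mpr hsup⟩ :
        IsCompl (LinearMap.ker PT) Ep)
    omega
end
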